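/- arXiv:0810.3305 — 9 statements merged into one kernel-verified Lean document; each statement's English description precedes it below -/
import Mathlib

section
/- If $x(\cdot)\in W_F$ and $z(\cdot)\in W_{F'}$, then $\int_{t_0}^T \big((\tfrac{d}{dt}Fx(t), z(t)) + (\tfrac{d}{dt}F'z(t), x(t))\big)\,dt = (Fx(T), F'^{+}F'z(T)) - (Fx(t_0), F'^{+}F'z(t_0))$, where $F'^{+}$ is the Moore–Penrose pseudoinverse of the transpose $F'$. -/
open Matrix MeasureTheory

/-- `B` is a Moore–Penrose pseudoinverse of `A`. -/
def IsMPInv {m n : ℕ} (A : Matrix (Fin m) (Fin n) ℝ) (B : Matrix (Fin n) (Fin m) ℝ) : Prop :=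
  A * B * A = A ∧ B * A * B = B ∧ (A * B)ᵀ = A * B ∧ (B * A)ᵀ = B * A

open Classical in
/-- The Moore–Penrose pseudoinverse of a real matrix. -/
noncomputable def pinv {m n : ℕ} (A : Matrix (Fin m) (Fin n) ℝ) : Matrix (Fin n) (Fin m) ℝ :=
  if h : ∃ B, IsMPInv A B then h.choose else 0

/-- `φ ∈ W_F` with (a.e.) derivative data `g` of `t ↦ Fφ(t)`:  `φ ∈ L₂(t₀,T)`, `g ∈ L₂(t₀,T)` and
`Fφ(t) = Fφ(t₀) + ∫_{t₀}^t g(s) ds` on `[t₀,T]`, i.e. `Fφ ∈ W₂¹(t₀,T)` with `d/dt Fφ = g`. -/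
def InWF {m n : ℕ} (t₀ T : ℝ) (F : Matrix (Fin m) (Fin n) ℝ)
    (φ : ℝ → Fin n → ℝ) (g : ℝ → Fin m → ℝ) : Prop :=
  MemLp φ 2 (volume.restrict (Set.Ioc t₀ T)) ∧
  MemLp g 2 (volume.restrict (Set.Ioc t₀ T)) ∧
  ∀ t ∈ Set.Icc t₀ T, F *ᵥ φ t = F *ᵥ φ t₀ + ∫ s in t₀..t, g s

section Aux

/-- Every real matrix has a Moore–Penrose pseudoinverse. -/
theorem exists_isMPInv {m n : ℕ} (A : Matrix (Fin m) (Fin n) ℝ) : ∃ B, IsMPInv A B := by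
  classical
  set S : Matrix (Fin m) (Fin m) ℝ := A * Aᵀ with hSdef
  have hS : S.IsHermitian := by
    have := Matrix.isHermitian_mul_conjTranspose_self A
    rwa [Matrix.conjTranspose_eq_transpose_of_trivial] at this
  set U : Matrix (Fin m) (Fin m) ℝ := (hS.eigenvectorUnitary : Matrix (Fin m) (Fin m) ℝ) with hU
  set lam : Fin m → ℝ := hS.eigenvalues with hlam
  set D : Matrix (Fin m) (Fin m) ℝ := Matrix.diagonal lam with hD
  set Dp : Matrix (Fin m) (Fin m) ℝ :=
    Matrix.diagonal (fun i => if lam i = 0 then 0 else (lam i)⁻¹) with hDp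
  have hUU : U * star U = 1 := (Matrix.mem_unitaryGroup_iff).mp hS.eigenvectorUnitary.2
  have hUU' : star U * U = 1 := (Matrix.mem_unitaryGroup_iff').mp hS.eigenvectorUnitary.2
  have hspec : S = U * D * star U := by
    have := hS.spectral_theorem
    simpa using this
  set Sp : Matrix (Fin m) (Fin m) ℝ := U * Dp * star U with hSp
  have conjmul : ∀ X Y : Matrix (Fin m) (Fin m) ℝ,
      (U * X * star U) * (U * Y * star U) = U * (X * Y) * star U := by
    intro X Y
    calc (U * X * star U) * (U * Y * star U) = U * X * (star U * U) * Y * star U := by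
          noncomm_ring
      _ = U * (X * Y) * star U := by rw [hUU']; noncomm_ring
  have hDDp : D * Dp = Dp * D := by
    rw [hD, hDp, Matrix.diagonal_mul_diagonal, Matrix.diagonal_mul_diagonal]
    exact congrArg Matrix.diagonal (funext fun i => mul_comm _ _)
  have hDDpD : D * Dp * D = D := by
    rw [hD, hDp, Matrix.diagonal_mul_diagonal, Matrix.diagonal_mul_diagonal]
    refine congrArg Matrix.diagonal (funext fun i => ?_)
    by_cases h : lam i = 0
    · simp [h]
    · rw [if_neg h]; field_simp
  have hDpDDp : Dp * D * Dp = Dp := by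
    rw [hD, hDp, Matrix.diagonal_mul_diagonal, Matrix.diagonal_mul_diagonal]
    refine congrArg Matrix.diagonal (funext fun i => ?_)
    by_cases h : lam i = 0
    · simp [h]
    · simp only [if_neg h]; field_simp
  have hSSpS : S * Sp * S = S := by
    rw [hspec, hSp, conjmul, conjmul, hDDpD]
  have hSpSSp : Sp * S * Sp = Sp := by
    rw [hspec, hSp, conjmul, conjmul, hDpDDp]
  have hcomm : S * Sp = Sp * S := by
    rw [hspec, hSp, conjmul, conjmul, hDDp]
  have hSpT : Spᵀ = Sp := by
    have h2 : Spᴴ = Sp := by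
      rw [hSp]
      simp only [Matrix.conjTranspose_mul, star_star]
      rw [show Dpᴴ = Dp by
        rw [Matrix.conjTranspose_eq_transpose_of_trivial, hDp, Matrix.diagonal_transpose]]
      noncomm_ring
    rwa [Matrix.conjTranspose_eq_transpose_of_trivial] at h2
  have hST : Sᵀ = S := by
    have h2 := hS
    rwa [Matrix.IsHermitian, Matrix.conjTranspose_eq_transpose_of_trivial] at h2
  have hPsymm : (S * Sp)ᵀ = S * Sp := by
    rw [Matrix.transpose_mul, hSpT, hST, hcomm]
  have hSP : S * (S * Sp) = S := by rw [hcomm, ← mul_assoc, hSSpS]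
  have hPS : S * Sp * S = S := hSSpS
  have hproj : S * Sp * A = A := by
    set M : Matrix (Fin m) (Fin n) ℝ := A - S * Sp * A with hM
    have hMM : M * Mᵀ = 0 := by
      have hMT : Mᵀ = Aᵀ - Aᵀ * (S * Sp)ᵀ := by
        rw [hM, Matrix.transpose_sub, Matrix.transpose_mul]
      rw [hM, hMT, hPsymm, Matrix.sub_mul, Matrix.mul_sub, Matrix.mul_sub]
      have e1 : A * (Aᵀ * (S * Sp)) = S := by rw [← Matrix.mul_assoc, ← hSdef, hSP]
      have e2 : S * Sp * A * Aᵀ = S := by rw [Matrix.mul_assoc, ← hSdef, hPS]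
      have e3 : S * Sp * A * (Aᵀ * (S * Sp)) = S := by
        rw [Matrix.mul_assoc, ← Matrix.mul_assoc A, ← hSdef, ← Matrix.mul_assoc, hPS, hSP]
      rw [e1, e2, e3, ← hSdef]
      abel
    have hM0 : M = 0 := by
      have h3 := Matrix.self_mul_conjTranspose_eq_zero (A := M)
      rw [Matrix.conjTranspose_eq_transpose_of_trivial] at h3
      exact h3.mp hMM
    have h4 : A - S * Sp * A = 0 := hM ▸ hM0
    exact (sub_eq_zero.mp h4).symm
  refine ⟨Aᵀ * Sp, ?_, ?_, ?_, ?_⟩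
  · calc A * (Aᵀ * Sp) * A = S * Sp * A := by rw [← Matrix.mul_assoc, ← hSdef]
      _ = A := hproj
  · calc Aᵀ * Sp * A * (Aᵀ * Sp)
        = Aᵀ * (Sp * (A * Aᵀ) * Sp) := by
          simp only [Matrix.mul_assoc]
      _ = Aᵀ * Sp := by rw [← hSdef, hSpSSp]
  · calc (A * (Aᵀ * Sp))ᵀ = (S * Sp)ᵀ := by rw [← Matrix.mul_assoc, ← hSdef]
      _ = S * Sp := hPsymm
      _ = A * (Aᵀ * Sp) := by rw [hSdef, Matrix.mul_assoc]
  · rw [Matrix.transpose_mul, Matrix.transpose_mul, Matrix.transpose_transpose, hSpT]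
    simp only [Matrix.mul_assoc]

/-- If all integrals over initial segments of `(t₀, T]` vanish, the function vanishes a.e. -/
lemma ae_zero_of_integral_Ioc_zero {t₀ T : ℝ} (hle : t₀ ≤ T) {f : ℝ → ℝ}
    (hf : IntegrableOn f (Set.Ioc t₀ T))
    (h : ∀ t ∈ Set.Icc t₀ T, ∫ s in Set.Ioc t₀ t, f s = 0) :
    f =ᵐ[volume.restrict (Set.Ioc t₀ T)] 0 := by
  set μ := volume.restrict (Set.Ioc t₀ T) with hμ
  have hfi : Integrable f μ := hf
  have key : ∀ ⦃s : Set ℝ⦄, MeasurableSet s → ∫ x in s, f x ∂μ = 0 := by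
    refine MeasurableSpace.induction_on_inter
      (C := fun s _ => ∫ x in s, f x ∂μ = 0)
      (BorelSpace.measurable_eq.trans (borel_eq_generateFrom_Iio ℝ)) ?_ (by simp) ?_ ?_ ?_
    · rintro _ ⟨a, rfl⟩ _ ⟨b, rfl⟩ -
      exact ⟨min a b, (Set.Iio_inter_Iio (a := a) (b := b)).symm⟩
    · rintro _ ⟨a, rfl⟩
      rw [hμ, Measure.restrict_restrict measurableSet_Iio]
      by_cases hA : a ≤ T
      · have hset : Set.Iio a ∩ Set.Ioc t₀ T = Set.Ioo t₀ a := by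
          ext y
          simp only [Set.mem_inter_iff, Set.mem_Iio, Set.mem_Ioc, Set.mem_Ioo]
          exact ⟨fun ⟨h1, h2, _⟩ => ⟨h2, h1⟩, fun ⟨h1, h2⟩ => ⟨h2, h1, by linarith⟩⟩
        rw [hset, ← integral_Ioc_eq_integral_Ioo]
        by_cases ha : t₀ ≤ a
        · exact h a ⟨ha, hA⟩
        · rw [Set.Ioc_eq_empty (by linarith), Measure.restrict_empty, integral_zero_measure]
      · have hset : Set.Iio a ∩ Set.Ioc t₀ T = Set.Ioc t₀ T := by
          ext y
          simp only [Set.mem_inter_iff, Set.mem_Iio, Set.mem_Ioc]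
          exact ⟨fun ⟨_, h2⟩ => h2, fun h2 => ⟨by linarith [h2.2], h2⟩⟩
        rw [hset]
        exact h T ⟨hle, le_rfl⟩
    · intro s hs hC
      rw [setIntegral_compl hs hfi, hC, sub_zero]
      have h5 : ∫ x, f x ∂μ = ∫ x in Set.Ioc t₀ T, f x := by rw [hμ]
      rw [h5]
      exact h T ⟨hle, le_rfl⟩
    · intro q hd hm hC
      rw [integral_iUnion hm hd hfi.integrableOn]
      simp only [hC]
      exact tsum_zero
  refine ae_eq_zero_of_forall_setIntegral_eq_of_sigmaFinite ?_ ?_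
  · exact fun s hs _ => hfi.integrableOn
  · exact fun s hs _ => key hs

lemma integrable_mul_primitive {a b : ℝ} {f h : ℝ → ℝ}
    (hf : IntegrableOn f (Set.Ioc a b)) (hh : IntegrableOn h (Set.Ioc a b)) :
    Integrable (fun t => f t * ∫ s in Set.Ioc a t, h s) (volume.restrict (Set.Ioc a b)) := by
  set μ := volume.restrict (Set.Ioc a b) with hμdef
  set H : ℝ → ℝ := fun t => ∫ s in Set.Ioc a t, h s with hHdef
  have hmem : ∀ᵐ t ∂μ, t ∈ Set.Ioc a b := ae_restrict_mem measurableSet_Ioc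
  have hHcont : ContinuousOn H (Set.Icc a b) := by
    refine intervalIntegral.continuousOn_primitive ?_
    rwa [integrableOn_Icc_iff_integrableOn_Ioc]
  have hHm : AEStronglyMeasurable H μ :=
    (hHcont.mono Set.Ioc_subset_Icc_self).aestronglyMeasurable measurableSet_Ioc
  have hHbd : ∀ᵐ t ∂μ, ‖H t‖ ≤ ∫ s in Set.Ioc a b, ‖h s‖ := by
    filter_upwards [hmem] with t htm
    calc ‖H t‖ ≤ ∫ s in Set.Ioc a t, ‖h s‖ := norm_integral_le_integral_norm _
      _ ≤ ∫ s in Set.Ioc a b, ‖h s‖ := by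
          refine setIntegral_mono_set hh.norm ?_ ?_
          · exact ae_of_all _ fun s => norm_nonneg _
          · exact HasSubset.Subset.eventuallyLE (Set.Ioc_subset_Ioc_right htm.2)
  have := Integrable.bdd_mul (c := ∫ s in Set.Ioc a b, ‖h s‖) hf hHm hHbd
  simpa [mul_comm] using this

lemma integrable_primitive_mul {a b : ℝ} {f h : ℝ → ℝ}
    (hf : IntegrableOn f (Set.Ioc a b)) (hh : IntegrableOn h (Set.Ioc a b)) :
    Integrable (fun t => (∫ s in Set.Ioc a t, f s) * h t) (volume.restrict (Set.Ioc a b)) := by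
  have := integrable_mul_primitive hh hf
  simpa [mul_comm] using this

lemma scalar_ibp {a b : ℝ} (hab : a ≤ b) {f h : ℝ → ℝ}
    (hf : IntegrableOn f (Set.Ioc a b)) (hh : IntegrableOn h (Set.Ioc a b)) :
    ∫ t in Set.Ioc a b,
        (f t * (∫ s in Set.Ioc a t, h s) + (∫ s in Set.Ioc a t, f s) * h t)
      = (∫ s in Set.Ioc a b, f s) * (∫ s in Set.Ioc a b, h s) := by
  set μ := volume.restrict (Set.Ioc a b) with hμdef
  set H : ℝ → ℝ := fun t => ∫ s in Set.Ioc a t, h s with hHdef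
  set F : ℝ → ℝ := fun t => ∫ s in Set.Ioc a t, f s with hFdef
  have hmem : ∀ᵐ t ∂μ, t ∈ Set.Ioc a b := ae_restrict_mem measurableSet_Ioc
  have hfH : Integrable (fun t => f t * H t) μ := integrable_mul_primitive hf hh
  have hFh : Integrable (fun t => F t * h t) μ := integrable_primitive_mul hf hh
  set k : ℝ × ℝ → ℝ := fun p => f p.1 * h p.2 with hkdef
  have hk : Integrable k (μ.prod μ) := hf.mul_prod hh
  set A : Set (ℝ × ℝ) := {p : ℝ × ℝ | p.2 ≤ p.1} with hAdef
  have hA : MeasurableSet A := measurableSet_le measurable_snd measurable_fst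
  have e1 : ∫ p in A, k p ∂(μ.prod μ) = ∫ t, f t * H t ∂μ := by
    rw [← integral_indicator hA, integral_prod _ (hk.indicator hA)]
    refine integral_congr_ae ?_
    filter_upwards [hmem] with t htm
    have hind : ∀ y : ℝ, A.indicator k (t, y) = (Set.Iic t).indicator (fun y => f t * h y) y := by
      intro y
      simp only [Set.indicator_apply, hAdef, Set.mem_setOf_eq, Set.mem_Iic, hkdef]
    simp only [hind]
    rw [integral_indicator measurableSet_Iic, integral_const_mul,
      hμdef, Measure.restrict_restrict measurableSet_Iic]
    have hset : Set.Iic t ∩ Set.Ioc a b = Set.Ioc a t := by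
      ext y
      simp only [Set.mem_inter_iff, Set.mem_Iic, Set.mem_Ioc]
      exact ⟨fun ⟨h1, h2, _⟩ => ⟨h2, h1⟩, fun ⟨h1, h2⟩ => ⟨h2, h1, by linarith [htm.2]⟩⟩
    rw [hset]
  have e2 : ∫ p in Aᶜ, k p ∂(μ.prod μ) = ∫ t, F t * h t ∂μ := by
    rw [← integral_indicator hA.compl, integral_prod_symm _ (hk.indicator hA.compl)]
    refine integral_congr_ae ?_
    filter_upwards [hmem] with t htm
    have hind : ∀ y : ℝ, Aᶜ.indicator k (y, t) = (Set.Iio t).indicator (fun y => f y * h t) y := by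
      intro y
      simp only [Set.indicator_apply, hAdef, Set.mem_compl_iff, Set.mem_setOf_eq, Set.mem_Iio,
        hkdef, not_le]
    simp only [hind]
    rw [integral_indicator measurableSet_Iio, integral_mul_const,
      hμdef, Measure.restrict_restrict measurableSet_Iio]
    have hset : Set.Iio t ∩ Set.Ioc a b = Set.Ioo a t := by
      ext y
      simp only [Set.mem_inter_iff, Set.mem_Iio, Set.mem_Ioc, Set.mem_Ioo]
      exact ⟨fun ⟨h1, h2, _⟩ => ⟨h2, h1⟩, fun ⟨h1, h2⟩ => ⟨h2, h1, by linarith [htm.2]⟩⟩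
    rw [hset, ← integral_Ioc_eq_integral_Ioo]
  have etot : ∫ p in A, k p ∂(μ.prod μ) + ∫ p in Aᶜ, k p ∂(μ.prod μ)
      = (∫ s in Set.Ioc a b, f s) * (∫ s in Set.Ioc a b, h s) := by
    rw [integral_add_compl hA hk]
    exact integral_prod_mul f h
  calc ∫ t in Set.Ioc a b, (f t * H t + F t * h t)
      = (∫ t, f t * H t ∂μ) + ∫ t, F t * h t ∂μ := integral_add hfH hFh
    _ = (∫ s in Set.Ioc a b, f s) * (∫ s in Set.Ioc a b, h s) := by
        rw [← e1, ← e2, etot]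

lemma dot_mulVec_left {k l : ℕ} (M : Matrix (Fin k) (Fin l) ℝ) (v : Fin l → ℝ) (w : Fin k → ℝ) :
    (M *ᵥ v) ⬝ᵥ w = v ⬝ᵥ (Mᵀ *ᵥ w) := by
  rw [Matrix.dotProduct_mulVec, Matrix.vecMul_transpose]

end Aux

/-- integration by parts: if `x ∈ W_F` and `z ∈ W_{F'}`, then
`∫_{t₀}^T ((d/dt Fx, z) + (d/dt F'z, x)) dt = (Fx(T), F'⁺F'z(T)) - (Fx(t₀), F'⁺F'z(t₀))`. -/
theorem integration_by_parts_WF {m n : ℕ} (t₀ T : ℝ) (ht : t₀ < T)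
    (F : Matrix (Fin m) (Fin n) ℝ)
    (x : ℝ → Fin n → ℝ) (g : ℝ → Fin m → ℝ) (hx : InWF t₀ T F x g)
    (z : ℝ → Fin m → ℝ) (u : ℝ → Fin n → ℝ) (hz : InWF t₀ T Fᵀ z u) :
    ∫ t in t₀..T, ((g t ⬝ᵥ z t) + (u t ⬝ᵥ x t)) =
      (F *ᵥ x T) ⬝ᵥ (pinv Fᵀ *ᵥ (Fᵀ *ᵥ z T)) -
        (F *ᵥ x t₀) ⬝ᵥ (pinv Fᵀ *ᵥ (Fᵀ *ᵥ z t₀)) := by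
  classical
  obtain ⟨hx2, hg2, hxF⟩ := hx
  obtain ⟨hz2, hu2, hzF⟩ := hz
  set μ := volume.restrict (Set.Ioc t₀ T) with hμdef
  haveI hfin : IsFiniteMeasure μ :=
    ⟨by rw [hμdef, Measure.restrict_apply_univ]; exact measure_Ioc_lt_top⟩
  -- the pseudoinverse
  have hMP : IsMPInv Fᵀ (pinv Fᵀ) := by
    rw [pinv, dif_pos (exists_isMPInv Fᵀ)]
    exact (exists_isMPInv Fᵀ).choose_spec
  set Bp := pinv Fᵀ with hBdef
  have hPsym : (Bp * Fᵀ)ᵀ = Bp * Fᵀ := hMP.2.2.2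
  have hQsym : (Fᵀ * Bp)ᵀ = Fᵀ * Bp := hMP.2.2.1
  have hABA : Fᵀ * Bp * Fᵀ = Fᵀ := hMP.1
  have hPF : (Bp * Fᵀ) * F = F := by
    have h1 : F * (Bpᵀ * F) = F := by
      have h2 := congrArg Matrix.transpose hABA
      rwa [Matrix.transpose_mul, Matrix.transpose_mul, Matrix.transpose_transpose] at h2
    have hFB : F * Bpᵀ = Bp * Fᵀ := by
      rw [← hPsym, Matrix.transpose_mul, Matrix.transpose_transpose]
    rw [← hFB, Matrix.mul_assoc, h1]
  -- integrability
  have hgI : Integrable g μ := hg2.integrable one_le_two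
  have huI : Integrable u μ := hu2.integrable one_le_two
  have hgIc : ∀ i, Integrable (fun t => g t i) μ := fun i =>
    (ContinuousLinearMap.proj (R := ℝ) (φ := fun _ : Fin m => ℝ) i).integrable_comp hgI
  have huIc : ∀ j, Integrable (fun t => u t j) μ := fun j =>
    (ContinuousLinearMap.proj (R := ℝ) (φ := fun _ : Fin n => ℝ) j).integrable_comp huI
  -- primitives (coordinatewise set-integral definitions)
  set Φ : ℝ → Fin m → ℝ := fun t i => ∫ s in Set.Ioc t₀ t, g s i with hΦdef
  set Ψ : ℝ → Fin n → ℝ := fun t j => ∫ s in Set.Ioc t₀ t, u s j with hΨdef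
  -- rewriting the W_F conditions using the primitives
  have hvec : ∀ (k : ℕ) (w : ℝ → Fin k → ℝ), Integrable w μ →
      ∀ t ∈ Set.Icc t₀ T, ∫ s in t₀..t, w s = fun i => ∫ s in Set.Ioc t₀ t, w s i := by
    intro k w hw t htt
    funext i
    have hInt : IntervalIntegrable w volume t₀ t := by
      rw [intervalIntegrable_iff_integrableOn_Ioc_of_le htt.1]
      exact MeasureTheory.IntegrableOn.mono_set hw (Set.Ioc_subset_Ioc_right htt.2)
    calc (∫ s in t₀..t, w s) i
        = (ContinuousLinearMap.proj (R := ℝ) (φ := fun _ : Fin k => ℝ) i)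
            (∫ s in t₀..t, w s) := rfl
      _ = ∫ s in t₀..t, w s i :=
          ((ContinuousLinearMap.proj (R := ℝ) (φ := fun _ : Fin k => ℝ) i).intervalIntegral_comp_comm
            hInt).symm
      _ = ∫ s in Set.Ioc t₀ t, w s i := intervalIntegral.integral_of_le htt.1
  have hxΦ : ∀ t ∈ Set.Icc t₀ T, F *ᵥ x t = F *ᵥ x t₀ + Φ t := by
    intro t htt
    rw [hxF t htt, hvec m g hgI t htt]
  have hzΨ : ∀ t ∈ Set.Icc t₀ T, Fᵀ *ᵥ z t = Fᵀ *ᵥ z t₀ + Ψ t := by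
    intro t htt
    rw [hzF t htt, hvec n u huI t htt]
  have hmem : ∀ᵐ t ∂μ, t ∈ Set.Ioc t₀ T := ae_restrict_mem measurableSet_Ioc
  -- a.e. projection identities
  have hgP : ∀ᵐ t ∂μ, (Bp * Fᵀ) *ᵥ g t = g t := by
    have hC : ∀ i : Fin m,
        (fun t => g t i - ((Bp * Fᵀ) *ᵥ g t) i) =ᵐ[μ] (0 : ℝ → ℝ) := by
      intro i
      have hPgc : Integrable (fun t => ((Bp * Fᵀ) *ᵥ g t) i) μ := by
        have : (fun t => ((Bp * Fᵀ) *ᵥ g t) i)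
            = fun t => ∑ j, (Bp * Fᵀ) i j * g t j := by
          funext t; simp [Matrix.mulVec, dotProduct]
        rw [this]
        exact integrable_finset_sum _ fun j _ => (hgIc j).const_mul _
      refine ae_zero_of_integral_Ioc_zero ht.le ((hgIc i).sub hPgc) ?_
      intro t htt
      have hgOn : ∀ j, IntegrableOn (fun s => g s j) (Set.Ioc t₀ t) volume := fun j =>
        MeasureTheory.IntegrableOn.mono_set (hgIc j) (Set.Ioc_subset_Ioc_right htt.2)
      have hPgOn : IntegrableOn (fun s => ((Bp * Fᵀ) *ᵥ g s) i) (Set.Ioc t₀ t) volume := by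
        have : (fun s => ((Bp * Fᵀ) *ᵥ g s) i)
            = fun s => ∑ j, (Bp * Fᵀ) i j * g s j := by
          funext s; simp [Matrix.mulVec, dotProduct]
        rw [this]
        exact integrable_finset_sum _ fun j _ => (hgOn j).const_mul _
      rw [integral_sub (hgOn i) hPgOn]
      have hint2 : ∫ s in Set.Ioc t₀ t, ((Bp * Fᵀ) *ᵥ g s) i = ((Bp * Fᵀ) *ᵥ Φ t) i := by
        have h6 : (fun s => ((Bp * Fᵀ) *ᵥ g s) i)
            = fun s => ∑ j, (Bp * Fᵀ) i j * g s j := by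
          funext s; simp [Matrix.mulVec, dotProduct]
        rw [h6, integral_finset_sum _ fun j _ => (hgOn j).const_mul _]
        simp only [Matrix.mulVec, dotProduct, hΦdef]
        exact Finset.sum_congr rfl fun j _ => integral_const_mul _ _
      rw [hint2]
      have hΦP : (Bp * Fᵀ) *ᵥ Φ t = Φ t := by
        have hΦt : Φ t = F *ᵥ x t - F *ᵥ x t₀ := by
          rw [hxΦ t htt]; abel
        rw [hΦt, Matrix.mulVec_sub, Matrix.mulVec_mulVec, Matrix.mulVec_mulVec, hPF]
      rw [hΦP, sub_self]
    have hall : ∀ᵐ t ∂μ, ∀ i : Fin m, g t i - ((Bp * Fᵀ) *ᵥ g t) i = 0 := by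
      rw [ae_all_iff]
      intro i
      exact hC i
    filter_upwards [hall] with t htall
    funext i
    have := htall i
    linarith
  have huQ : ∀ᵐ t ∂μ, (Fᵀ * Bp) *ᵥ u t = u t := by
    have hC : ∀ j : Fin n,
        (fun t => u t j - ((Fᵀ * Bp) *ᵥ u t) j) =ᵐ[μ] (0 : ℝ → ℝ) := by
      intro j
      have hQuc : Integrable (fun t => ((Fᵀ * Bp) *ᵥ u t) j) μ := by
        have : (fun t => ((Fᵀ * Bp) *ᵥ u t) j)
            = fun t => ∑ i, (Fᵀ * Bp) j i * u t i := by
          funext t; simp [Matrix.mulVec, dotProduct]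
        rw [this]
        exact integrable_finset_sum _ fun i _ => (huIc i).const_mul _
      refine ae_zero_of_integral_Ioc_zero ht.le ((huIc j).sub hQuc) ?_
      intro t htt
      have huOn : ∀ i, IntegrableOn (fun s => u s i) (Set.Ioc t₀ t) volume := fun i =>
        MeasureTheory.IntegrableOn.mono_set (huIc i) (Set.Ioc_subset_Ioc_right htt.2)
      have hQuOn : IntegrableOn (fun s => ((Fᵀ * Bp) *ᵥ u s) j) (Set.Ioc t₀ t) volume := by
        have : (fun s => ((Fᵀ * Bp) *ᵥ u s) j)
            = fun s => ∑ i, (Fᵀ * Bp) j i * u s i := by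
          funext s; simp [Matrix.mulVec, dotProduct]
        rw [this]
        exact integrable_finset_sum _ fun i _ => (huOn i).const_mul _
      rw [integral_sub (huOn j) hQuOn]
      have hint2 : ∫ s in Set.Ioc t₀ t, ((Fᵀ * Bp) *ᵥ u s) j = ((Fᵀ * Bp) *ᵥ Ψ t) j := by
        have h6 : (fun s => ((Fᵀ * Bp) *ᵥ u s) j)
            = fun s => ∑ i, (Fᵀ * Bp) j i * u s i := by
          funext s; simp [Matrix.mulVec, dotProduct]
        rw [h6, integral_finset_sum _ fun i _ => (huOn i).const_mul _]
        simp only [Matrix.mulVec, dotProduct, hΨdef]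
        exact Finset.sum_congr rfl fun i _ => integral_const_mul _ _
      rw [hint2]
      have hΨQ : (Fᵀ * Bp) *ᵥ Ψ t = Ψ t := by
        have hΨt : Ψ t = Fᵀ *ᵥ z t - Fᵀ *ᵥ z t₀ := by
          rw [hzΨ t htt]; abel
        rw [hΨt, Matrix.mulVec_sub, Matrix.mulVec_mulVec, Matrix.mulVec_mulVec, hABA]
      rw [hΨQ, sub_self]
    have hall : ∀ᵐ t ∂μ, ∀ j : Fin n, u t j - ((Fᵀ * Bp) *ᵥ u t) j = 0 := by
      rw [ae_all_iff]
      intro j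
      exact hC j
    filter_upwards [hall] with t htall
    funext j
    have := htall j
    linarith
  -- abbreviations
  set p0 : Fin m → ℝ := F *ᵥ x t₀ with hp0
  set q0 : Fin n → ℝ := Fᵀ *ᵥ z t₀ with hq0
  -- a.e. rewriting of the integrand
  have key : ∀ᵐ t ∂μ, g t ⬝ᵥ z t + u t ⬝ᵥ x t
      = (g t ⬝ᵥ (Bp *ᵥ q0) + u t ⬝ᵥ (Bpᵀ *ᵥ p0))
        + (g t ⬝ᵥ (Bp *ᵥ Ψ t) + u t ⬝ᵥ (Bpᵀ *ᵥ Φ t)) := by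
    filter_upwards [hmem, hgP, huQ] with t htm hgPt huQt
    have htt : t ∈ Set.Icc t₀ T := ⟨htm.1.le, htm.2⟩
    have e1 : g t ⬝ᵥ z t = g t ⬝ᵥ (Bp *ᵥ q0) + g t ⬝ᵥ (Bp *ᵥ Ψ t) := by
      conv_lhs => rw [← hgPt]
      rw [dot_mulVec_left, hPsym, ← Matrix.mulVec_mulVec, hzΨ t htt,
        Matrix.mulVec_add, dotProduct_add]
    have e2 : u t ⬝ᵥ x t = u t ⬝ᵥ (Bpᵀ *ᵥ p0) + u t ⬝ᵥ (Bpᵀ *ᵥ Φ t) := by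
      conv_lhs => rw [← huQt]
      rw [dot_mulVec_left]
      rw [show (Fᵀ * Bp)ᵀ = Bpᵀ * F by rw [Matrix.transpose_mul, Matrix.transpose_transpose]]
      rw [← Matrix.mulVec_mulVec, hxΦ t htt, Matrix.mulVec_add, dotProduct_add]
    rw [e1, e2]; ring
  -- integrability of the pieces
  have hI1 : Integrable (fun t => g t ⬝ᵥ (Bp *ᵥ q0)) μ := by
    have h7 : (fun t => g t ⬝ᵥ (Bp *ᵥ q0)) = fun t => ∑ i, g t i * (Bp *ᵥ q0) i := by
      funext t; simp [dotProduct]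
    rw [h7]
    exact integrable_finset_sum _ fun i _ => (hgIc i).mul_const _
  have hI2 : Integrable (fun t => u t ⬝ᵥ (Bpᵀ *ᵥ p0)) μ := by
    have h7 : (fun t => u t ⬝ᵥ (Bpᵀ *ᵥ p0)) = fun t => ∑ j, u t j * (Bpᵀ *ᵥ p0) j := by
      funext t; simp [dotProduct]
    rw [h7]
    exact integrable_finset_sum _ fun j _ => (huIc j).mul_const _
  have expand3 : ∀ t, g t ⬝ᵥ (Bp *ᵥ Ψ t) + u t ⬝ᵥ (Bpᵀ *ᵥ Φ t)
      = ∑ i, ∑ j, Bp i j * (g t i * Ψ t j + Φ t i * u t j) := by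
    intro t
    have a1 : g t ⬝ᵥ (Bp *ᵥ Ψ t) = ∑ i, ∑ j, Bp i j * (g t i * Ψ t j) := by
      simp only [dotProduct, Matrix.mulVec, Finset.mul_sum]
      exact Finset.sum_congr rfl fun i _ => Finset.sum_congr rfl fun j _ => by ring
    have a2 : u t ⬝ᵥ (Bpᵀ *ᵥ Φ t) = ∑ i, ∑ j, Bp i j * (Φ t i * u t j) := by
      simp only [dotProduct, Matrix.mulVec, Finset.mul_sum, Matrix.transpose_apply]
      rw [Finset.sum_comm]
      exact Finset.sum_congr rfl fun i _ => Finset.sum_congr rfl fun j _ => by ring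
    rw [a1, a2, ← Finset.sum_add_distrib]
    refine Finset.sum_congr rfl fun i _ => ?_
    rw [← Finset.sum_add_distrib]
    exact Finset.sum_congr rfl fun j _ => by ring
  have hterm : ∀ (i : Fin m) (j : Fin n),
      Integrable (fun t => Bp i j * (g t i * Ψ t j + Φ t i * u t j)) μ := by
    intro i j
    refine Integrable.const_mul ?_ _
    exact (integrable_mul_primitive (hgIc i) (huIc j)).add
      (integrable_primitive_mul (hgIc i) (huIc j))
  have hI3 : Integrable (fun t => g t ⬝ᵥ (Bp *ᵥ Ψ t) + u t ⬝ᵥ (Bpᵀ *ᵥ Φ t)) μ := by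
    have h8 : (fun t => g t ⬝ᵥ (Bp *ᵥ Ψ t) + u t ⬝ᵥ (Bpᵀ *ᵥ Φ t))
        = fun t => ∑ i, ∑ j, Bp i j * (g t i * Ψ t j + Φ t i * u t j) :=
      funext expand3
    rw [h8]
    exact integrable_finset_sum _ fun i _ => integrable_finset_sum _ fun j _ => hterm i j
  -- compute the three integrals
  have A1 : ∫ t, g t ⬝ᵥ (Bp *ᵥ q0) ∂μ = Φ T ⬝ᵥ (Bp *ᵥ q0) := by
    have h7 : (fun t => g t ⬝ᵥ (Bp *ᵥ q0)) = fun t => ∑ i, g t i * (Bp *ᵥ q0) i := by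
      funext t; simp [dotProduct]
    rw [h7, integral_finset_sum _ fun i _ => (hgIc i).mul_const _]
    simp only [dotProduct, hΦdef]
    exact Finset.sum_congr rfl fun i _ => integral_mul_const _ _
  have A2 : ∫ t, u t ⬝ᵥ (Bpᵀ *ᵥ p0) ∂μ = Ψ T ⬝ᵥ (Bpᵀ *ᵥ p0) := by
    have h7 : (fun t => u t ⬝ᵥ (Bpᵀ *ᵥ p0)) = fun t => ∑ j, u t j * (Bpᵀ *ᵥ p0) j := by
      funext t; simp [dotProduct]
    rw [h7, integral_finset_sum _ fun j _ => (huIc j).mul_const _]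
    simp only [dotProduct, hΨdef]
    exact Finset.sum_congr rfl fun j _ => integral_mul_const _ _
  have A3 : ∫ t, (g t ⬝ᵥ (Bp *ᵥ Ψ t) + u t ⬝ᵥ (Bpᵀ *ᵥ Φ t)) ∂μ = Φ T ⬝ᵥ (Bp *ᵥ Ψ T) := by
    have h8 : (fun t => g t ⬝ᵥ (Bp *ᵥ Ψ t) + u t ⬝ᵥ (Bpᵀ *ᵥ Φ t))
        = fun t => ∑ i, ∑ j, Bp i j * (g t i * Ψ t j + Φ t i * u t j) :=
      funext expand3
    rw [h8, integral_finset_sum _ fun i _ => integrable_finset_sum _ fun j _ => hterm i j]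
    have h9 : ∀ i : Fin m, ∫ t, ∑ j, Bp i j * (g t i * Ψ t j + Φ t i * u t j) ∂μ
        = ∑ j, Bp i j * (Φ T i * Ψ T j) := by
      intro i
      rw [integral_finset_sum _ fun j _ => hterm i j]
      refine Finset.sum_congr rfl fun j _ => ?_
      rw [integral_const_mul]
      congr 1
      exact scalar_ibp ht.le (hgIc i) (huIc j)
    rw [Finset.sum_congr rfl fun i _ => h9 i]
    have a1 : Φ T ⬝ᵥ (Bp *ᵥ Ψ T) = ∑ i, ∑ j, Bp i j * (Φ T i * Ψ T j) := by
      simp only [dotProduct, Matrix.mulVec, Finset.mul_sum]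
      exact Finset.sum_congr rfl fun i _ => Finset.sum_congr rfl fun j _ => by ring
    rw [a1]
  -- put the left-hand side together
  have LHS : ∫ t in t₀..T, (g t ⬝ᵥ z t + u t ⬝ᵥ x t)
      = Φ T ⬝ᵥ (Bp *ᵥ q0) + Ψ T ⬝ᵥ (Bpᵀ *ᵥ p0) + Φ T ⬝ᵥ (Bp *ᵥ Ψ T) := by
    rw [intervalIntegral.integral_of_le ht.le]
    calc ∫ t in Set.Ioc t₀ T, (g t ⬝ᵥ z t + u t ⬝ᵥ x t)
        = ∫ t, ((g t ⬝ᵥ (Bp *ᵥ q0) + u t ⬝ᵥ (Bpᵀ *ᵥ p0))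
            + (g t ⬝ᵥ (Bp *ᵥ Ψ t) + u t ⬝ᵥ (Bpᵀ *ᵥ Φ t))) ∂μ := integral_congr_ae key
      _ = (∫ t, (g t ⬝ᵥ (Bp *ᵥ q0) + u t ⬝ᵥ (Bpᵀ *ᵥ p0)) ∂μ)
            + ∫ t, (g t ⬝ᵥ (Bp *ᵥ Ψ t) + u t ⬝ᵥ (Bpᵀ *ᵥ Φ t)) ∂μ :=
          integral_add (hI1.add hI2) hI3
      _ = Φ T ⬝ᵥ (Bp *ᵥ q0) + Ψ T ⬝ᵥ (Bpᵀ *ᵥ p0) + Φ T ⬝ᵥ (Bp *ᵥ Ψ T) := by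
          rw [integral_add hI1 hI2, A1, A2, A3]
  -- compute the right-hand side
  have hTmem : T ∈ Set.Icc t₀ T := ⟨ht.le, le_rfl⟩
  have RHS : (F *ᵥ x T) ⬝ᵥ (Bp *ᵥ (Fᵀ *ᵥ z T)) - (F *ᵥ x t₀) ⬝ᵥ (Bp *ᵥ (Fᵀ *ᵥ z t₀))
      = Φ T ⬝ᵥ (Bp *ᵥ q0) + Ψ T ⬝ᵥ (Bpᵀ *ᵥ p0) + Φ T ⬝ᵥ (Bp *ᵥ Ψ T) := by
    rw [hxΦ T hTmem, hzΨ T hTmem]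
    rw [Matrix.mulVec_add, dotProduct_add, add_dotProduct,
      add_dotProduct]
    have ecomm : p0 ⬝ᵥ (Bp *ᵥ Ψ T) = Ψ T ⬝ᵥ (Bpᵀ *ᵥ p0) := by
      rw [dotProduct_comm, dot_mulVec_left]
    rw [ecomm]
    ring
  rw [LHS, ← RHS, hBdef]
end

section
/- The linear mapping $L:\varphi\mapsto[\tfrac{d}{dt}F\varphi - C(\cdot)\varphi,\ F\varphi(t_0)]$ with domain $W_F\subset L_2(t_0,T)$ is a closed linear operator from $L_2((t_0,T);\mathbb{R}^n)$ to $L_2((t_0,T);\mathbb{R}^m)\times\mathbb{R}^m$. -/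
open Matrix MeasureTheory Filter

lemma continuous_mulVecPair {m n : ℕ} :
    Continuous fun p : Matrix (Fin m) (Fin n) ℝ × (Fin n → ℝ) => p.1 *ᵥ p.2 := by
  refine continuous_pi fun i => ?_
  simp only [Matrix.mulVec, dotProduct]
  refine continuous_finset_sum _ fun j _ => Continuous.mul ?_ ?_
  · exact (continuous_apply j).comp ((continuous_apply i).comp continuous_fst)
  · exact (continuous_apply j).comp continuous_snd

lemma mulVec_norm_le {m n : ℕ} (A : Matrix (Fin m) (Fin n) ℝ) (x : Fin n → ℝ) :
    ‖A *ᵥ x‖ ≤ (∑ i, ∑ j, |A i j|) * ‖x‖ := by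
  have hM : 0 ≤ (∑ i, ∑ j, |A i j|) * ‖x‖ := by positivity
  rw [pi_norm_le_iff_of_nonneg hM]
  intro i
  calc ‖(A *ᵥ x) i‖ = |∑ j, A i j * x j| := rfl
    _ ≤ ∑ j, |A i j * x j| := Finset.abs_sum_le_sum_abs _ _
    _ ≤ ∑ j, |A i j| * ‖x‖ := by
        refine Finset.sum_le_sum fun j _ => ?_
        rw [abs_mul]
        exact mul_le_mul_of_nonneg_left (norm_le_pi_norm x j) (abs_nonneg _)
    _ = (∑ j, |A i j|) * ‖x‖ := by rw [← Finset.sum_mul]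
    _ ≤ (∑ i, ∑ j, |A i j|) * ‖x‖ := by
        refine mul_le_mul_of_nonneg_right ?_ (norm_nonneg _)
        exact Finset.single_le_sum (f := fun i => ∑ j, |A i j|)
          (fun i _ => Finset.sum_nonneg fun j _ => abs_nonneg _) (Finset.mem_univ i)

/-- Convergence in `L₂(t₀,T)`. -/
def TendstoL2 {d : ℕ} (t₀ T : ℝ) (φs : ℕ → ℝ → Fin d → ℝ) (φ : ℝ → Fin d → ℝ) : Prop :=
  Tendsto (fun k => ∫ t in t₀..T, ‖φs k t - φ t‖ ^ 2) atTop (nhds 0)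

lemma tendsto_eLpNorm_of_tendstoL2 {d : ℕ} {t₀ T : ℝ} (ht : t₀ ≤ T)
    {us : ℕ → ℝ → Fin d → ℝ} {u : ℝ → Fin d → ℝ}
    (hus : ∀ k, MemLp (us k) 2 (volume.restrict (Set.Ioc t₀ T)))
    (hu : MemLp u 2 (volume.restrict (Set.Ioc t₀ T)))
    (h : TendstoL2 t₀ T us u) :
    Tendsto (fun k => eLpNorm (fun t => us k t - u t) 2 (volume.restrict (Set.Ioc t₀ T)))
      atTop (nhds 0) := by
  set μ := volume.restrict (Set.Ioc t₀ T)
  have hint : ∀ k, ∫ t in t₀..T, ‖us k t - u t‖ ^ 2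
      = ∫ t, ‖us k t - u t‖ ^ ((2:ENNReal).toReal) ∂μ := by
    intro k
    rw [intervalIntegral.integral_of_le ht]
    refine setIntegral_congr_fun measurableSet_Ioc fun t _ => ?_
    norm_num
  have hform : ∀ k, eLpNorm (fun t => us k t - u t) 2 μ
      = ENNReal.ofReal ((∫ t in t₀..T, ‖us k t - u t‖ ^ 2) ^ ((2:ENNReal).toReal)⁻¹) := by
    intro k
    rw [hint k]
    exact ((hus k).sub hu).eLpNorm_eq_integral_rpow_norm (by norm_num) (by norm_num)
  simp only [hform]
  have h2 : Tendsto (fun k => ((∫ t in t₀..T, ‖us k t - u t‖ ^ 2) ^ ((2:ENNReal).toReal)⁻¹)) atTop (nhds 0) := by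
    have : ContinuousAt (fun x : ℝ => x ^ ((2:ENNReal).toReal)⁻¹) 0 :=
      Real.continuousAt_rpow_const 0 _ (Or.inr (by norm_num))
    have := this.tendsto.comp h
    simpa [Function.comp_def] using this
  simpa using ENNReal.tendsto_ofReal h2

/-- the mapping `L : φ ↦ [d/dt Fφ - Cφ, Fφ(t₀)]` with domain `W_F ⊂ L₂(t₀,T)` is a
closed linear operator: if `φ_k ∈ W_F`, `φ_k → φ` in `L₂`, `Lφ_k → [f, f₀]`, then (a representative
of) `φ` belongs to `W_F` and `Lφ = [f, f₀]`. -/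
theorem L_is_closed {m n : ℕ} (t₀ T : ℝ) (ht : t₀ < T)
    (F : Matrix (Fin m) (Fin n) ℝ)
    (C : ℝ → Matrix (Fin m) (Fin n) ℝ) (hC : ContinuousOn C (Set.Icc t₀ T))
    (φs : ℕ → ℝ → Fin n → ℝ) (gs : ℕ → ℝ → Fin m → ℝ)
    (hWF : ∀ k, InWF t₀ T F (φs k) (gs k))
    (φ : ℝ → Fin n → ℝ) (hφ : MemLp φ 2 (volume.restrict (Set.Ioc t₀ T)))
    (hφconv : TendstoL2 t₀ T φs φ)
    (f : ℝ → Fin m → ℝ) (hf : MemLp f 2 (volume.restrict (Set.Ioc t₀ T)))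
    (hfconv : TendstoL2 t₀ T (fun k t => gs k t - C t *ᵥ φs k t) f)
    (f₀ : Fin m → ℝ) (hf₀conv : Tendsto (fun k => F *ᵥ φs k t₀) atTop (nhds f₀)) :
    ∃ ψ g, (∀ᵐ t ∂(volume.restrict (Set.Ioc t₀ T)), ψ t = φ t) ∧
      InWF t₀ T F ψ g ∧
      (∀ᵐ t ∂(volume.restrict (Set.Ioc t₀ T)), g t - C t *ᵥ ψ t = f t) ∧
      F *ᵥ ψ t₀ = f₀ := by
  classical
  set μ := volume.restrict (Set.Ioc t₀ T) with hμ
  haveI : IsFiniteMeasure μ := ⟨by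
    rw [Measure.restrict_apply_univ, Real.volume_Ioc]
    exact ENNReal.ofReal_lt_top⟩
  -- bound for C on Icc
  obtain ⟨M, hM0, hMb⟩ : ∃ M : ℝ, 0 ≤ M ∧ ∀ t ∈ Set.Icc t₀ T, ∀ v : Fin n → ℝ,
      ‖C t *ᵥ v‖ ≤ M * ‖v‖ := by
    have hBc : ContinuousOn (fun t => ∑ i, ∑ j, |C t i j|) (Set.Icc t₀ T) := by
      refine continuousOn_finset_sum _ fun i _ => continuousOn_finset_sum _ fun j _ => ?_
      exact (((continuous_apply j).comp (continuous_apply i)).comp_continuousOn hC).abs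
    obtain ⟨t₁, ht₁, hmax⟩ := isCompact_Icc.exists_isMaxOn (Set.nonempty_Icc.2 ht.le) hBc
    refine ⟨∑ i, ∑ j, |C t₁ i j|, Finset.sum_nonneg fun i _ => Finset.sum_nonneg fun j _ => abs_nonneg _,
      fun t htt v => ?_⟩
    exact (mulVec_norm_le (C t) v).trans
      (mul_le_mul_of_nonneg_right (hmax htt) (norm_nonneg _))
  -- C is a.e. strongly measurable wrt μ
  haveI : TopologicalSpace.PseudoMetrizableSpace (Matrix (Fin m) (Fin n) ℝ) :=
    inferInstanceAs (TopologicalSpace.PseudoMetrizableSpace (Fin m → Fin n → ℝ))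
  have hCm : AEStronglyMeasurable C μ := by
    refine (hC.aestronglyMeasurable measurableSet_Icc).mono_measure
      (Measure.restrict_mono Set.Ioc_subset_Icc_self le_rfl)
  have haeIcc : ∀ᵐ t ∂μ, t ∈ Set.Icc t₀ T :=
    (ae_restrict_mem measurableSet_Ioc).mono fun t ht => Set.Ioc_subset_Icc_self ht
  -- Memℒp of t ↦ C t *ᵥ u t
  have hCmul : ∀ (u : ℝ → Fin n → ℝ), MemLp u 2 μ → MemLp (fun t => C t *ᵥ u t) 2 μ := by
    intro u hu
    have hm : AEStronglyMeasurable (fun t => C t *ᵥ u t) μ :=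
      continuous_mulVecPair.comp_aestronglyMeasurable (hCm.prodMk hu.aestronglyMeasurable)
    refine MemLp.of_le ((hu.norm.const_mul M)) hm ?_
    filter_upwards [haeIcc] with t htt
    calc ‖C t *ᵥ u t‖ ≤ M * ‖u t‖ := hMb t htt (u t)
      _ ≤ ‖M * ‖u t‖‖ := le_abs_self _
  -- the limit derivative
  set g : ℝ → Fin m → ℝ := fun t => f t + C t *ᵥ φ t with hgdef
  have hg : MemLp g 2 μ := hf.add (hCmul φ hφ)
  have hgint : IntegrableOn g (Set.Ioc t₀ T) volume :=
    memLp_one_iff_integrable.1 (hg.mono_exponent (by norm_num))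
  have hgsint : ∀ k, IntegrableOn (gs k) (Set.Ioc t₀ T) volume := fun k =>
    memLp_one_iff_integrable.1 ((hWF k).2.1.mono_exponent (by norm_num))
  -- L² convergences
  have e1 : Tendsto (fun k => eLpNorm (fun t => φs k t - φ t) 2 μ) atTop (nhds 0) :=
    tendsto_eLpNorm_of_tendstoL2 ht.le (fun k => (hWF k).1) hφ hφconv
  have e2 : Tendsto (fun k => eLpNorm (fun t => (gs k t - C t *ᵥ φs k t) - f t) 2 μ)
      atTop (nhds 0) :=
    tendsto_eLpNorm_of_tendstoL2 ht.le
      (fun k => (hWF k).2.1.sub (hCmul (φs k) (hWF k).1)) hf hfconv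
  have e3 : Tendsto (fun k => eLpNorm (fun t => C t *ᵥ (φs k t - φ t)) 2 μ) atTop (nhds 0) := by
    have hb : ∀ k, eLpNorm (fun t => C t *ᵥ (φs k t - φ t)) 2 μ
        ≤ (M.toNNReal : ENNReal) * eLpNorm (fun t => φs k t - φ t) 2 μ := by
      intro k
      have := eLpNorm_le_nnreal_smul_eLpNorm_of_ae_le_mul (μ := μ)
        (f := fun t => C t *ᵥ (φs k t - φ t)) (g := fun t => φs k t - φ t)
        (c := M.toNNReal) ?_ 2
      · simpa [ENNReal.smul_def] using this
      · filter_upwards [haeIcc] with t htt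
        have h1 : ‖C t *ᵥ (φs k t - φ t)‖ ≤ M * ‖φs k t - φ t‖ := hMb t htt _
        rw [← NNReal.coe_le_coe]
        push_cast
        simpa [Real.coe_toNNReal M hM0] using h1
    have hmul : Tendsto (fun k => (M.toNNReal : ENNReal) * eLpNorm (fun t => φs k t - φ t) 2 μ)
        atTop (nhds 0) := by
      simpa using ENNReal.Tendsto.const_mul e1 (Or.inr ENNReal.coe_ne_top)
    exact tendsto_of_tendsto_of_tendsto_of_le_of_le tendsto_const_nhds hmul
      (fun k => zero_le) hb
  have e4 : Tendsto (fun k => eLpNorm (fun t => gs k t - g t) 2 μ) atTop (nhds 0) := by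
    have hdecomp : ∀ k, (fun t => gs k t - g t)
        = fun t => ((gs k t - C t *ᵥ φs k t) - f t) + (C t *ᵥ (φs k t - φ t)) := by
      intro k; funext t
      rw [hgdef]; simp only [Matrix.mulVec_sub]; abel
    have hb : ∀ k, eLpNorm (fun t => gs k t - g t) 2 μ
        ≤ eLpNorm (fun t => (gs k t - C t *ᵥ φs k t) - f t) 2 μ
          + eLpNorm (fun t => C t *ᵥ (φs k t - φ t)) 2 μ := by
      intro k
      rw [hdecomp k]
      exact eLpNorm_add_le
        (((hWF k).2.1.sub (hCmul (φs k) (hWF k).1)).sub hf).aestronglyMeasurable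
        (hCmul (fun t => φs k t - φ t) ((hWF k).1.sub hφ)).aestronglyMeasurable one_le_two
    have hsum : Tendsto (fun k => eLpNorm (fun t => (gs k t - C t *ᵥ φs k t) - f t) 2 μ
        + eLpNorm (fun t => C t *ᵥ (φs k t - φ t)) 2 μ) atTop (nhds 0) := by
      simpa using e2.add e3
    exact tendsto_of_tendsto_of_tendsto_of_le_of_le tendsto_const_nhds hsum
      (fun k => zero_le) hb
  -- L¹ convergence of gs to g
  set A : ℕ → ℝ := fun k => ∫ t in Set.Ioc t₀ T, ‖gs k t - g t‖ with hAdef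
  have hA : Tendsto A atTop (nhds 0) := by
    have hofReal : ∀ k, ENNReal.ofReal (A k) = eLpNorm (fun t => gs k t - g t) 1 μ := by
      intro k
      rw [eLpNorm_one_eq_lintegral_enorm, hAdef]
      exact ofReal_integral_norm_eq_lintegral_enorm ((hgsint k).sub hgint)
    have hnonneg : ∀ k, 0 ≤ A k := fun k =>
      integral_nonneg fun t => norm_nonneg _
    set c : ENNReal := (μ Set.univ) ^ ((1:ℝ)/(1:ENNReal).toReal - (1:ℝ)/(2:ENNReal).toReal)
    have hc : c ≠ ⊤ := by
      refine (ENNReal.rpow_lt_top_of_nonneg (by norm_num) (measure_ne_top μ _)).ne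
    have h1 : ∀ k, eLpNorm (fun t => gs k t - g t) 1 μ ≤
        eLpNorm (fun t => gs k t - g t) 2 μ * c :=
      fun k => eLpNorm_le_eLpNorm_mul_rpow_measure_univ (by norm_num)
        (((hWF k).2.1.sub hg).aestronglyMeasurable)
    have h2 : Tendsto (fun k => eLpNorm (fun t => gs k t - g t) 2 μ * c) atTop (nhds 0) := by
      simpa using ENNReal.Tendsto.mul_const e4 (Or.inr hc)
    have h3 : Tendsto (fun k => eLpNorm (fun t => gs k t - g t) 1 μ) atTop (nhds 0) :=
      tendsto_of_tendsto_of_tendsto_of_le_of_le tendsto_const_nhds h2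
        (fun k => zero_le) h1
    have h4 : Tendsto (fun k => (eLpNorm (fun t => gs k t - g t) 1 μ).toReal) atTop (nhds 0) := by
      have := (ENNReal.tendsto_toReal (by simp : (0:ENNReal) ≠ ⊤)).comp h3
      simpa [Function.comp_def] using this
    refine h4.congr fun k => ?_
    rw [← hofReal k, ENNReal.toReal_ofReal (hnonneg k)]
  have hAbound : ∀ k, ∀ t ∈ Set.Icc t₀ T,
      ‖(∫ s in t₀..t, gs k s) - ∫ s in t₀..t, g s‖ ≤ A k := by
    intro k t htt
    have hsub : Set.Ioc t₀ t ⊆ Set.Ioc t₀ T := Set.Ioc_subset_Ioc_right htt.2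
    have ii1 : IntervalIntegrable (gs k) volume t₀ t :=
      (intervalIntegrable_iff_integrableOn_Ioc_of_le htt.1).2 ((hgsint k).mono_set hsub)
    have ii2 : IntervalIntegrable g volume t₀ t :=
      (intervalIntegrable_iff_integrableOn_Ioc_of_le htt.1).2 (hgint.mono_set hsub)
    rw [← intervalIntegral.integral_sub ii1 ii2, intervalIntegral.integral_of_le htt.1]
    calc ‖∫ s in Set.Ioc t₀ t, (gs k s - g s)‖
        ≤ ∫ s in Set.Ioc t₀ t, ‖gs k s - g s‖ := norm_integral_le_integral_norm _
      _ ≤ A k := by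
          rw [hAdef]
          exact setIntegral_mono_set (((hgsint k).sub hgint).norm)
            (Eventually.of_forall fun s => norm_nonneg _)
            (HasSubset.Subset.eventuallyLE hsub)
  have hIconv : ∀ t ∈ Set.Icc t₀ T,
      Tendsto (fun k => ∫ s in t₀..t, gs k s) atTop (nhds (∫ s in t₀..t, g s)) := by
    intro t htt
    rw [tendsto_iff_norm_sub_tendsto_zero]
    exact squeeze_zero (fun k => norm_nonneg _) (fun k => hAbound k t htt) hA
  set H : ℝ → Fin m → ℝ := fun t => f₀ + ∫ s in t₀..t, g s with hHdef
  have hHtend : ∀ t ∈ Set.Icc t₀ T,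
      Tendsto (fun k => F *ᵥ φs k t) atTop (nhds (H t)) := by
    intro t htt
    have : ∀ k, F *ᵥ φs k t = F *ᵥ φs k t₀ + ∫ s in t₀..t, gs k s := fun k =>
      (hWF k).2.2 t htt
    simp only [this]
    exact hf₀conv.add (hIconv t htt)
  have hrange : ∀ t ∈ Set.Icc t₀ T, ∃ x, F *ᵥ x = H t := by
    intro t htt
    have hcl : IsClosed (LinearMap.range F.mulVecLin : Set (Fin m → ℝ)) :=
      Submodule.closed_of_finiteDimensional _
    have hmem : H t ∈ (LinearMap.range F.mulVecLin : Set (Fin m → ℝ)) := by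
      refine hcl.mem_of_tendsto (hHtend t htt) (Eventually.of_forall fun k => ?_)
      exact ⟨φs k t, Matrix.mulVecLin_apply ..⟩
    obtain ⟨x, hx⟩ := hmem
    exact ⟨x, by rw [← Matrix.mulVecLin_apply]; exact hx⟩
  -- H is continuous on Icc, hence a.e. strongly measurable
  have hHm : AEStronglyMeasurable H μ := by
    have hicc : IntegrableOn g (Set.Icc t₀ T) volume :=
      (integrableOn_Icc_iff_integrableOn_Ioc).2 hgint
    have h1 : ContinuousOn (fun x => ∫ s in Set.Ioc t₀ x, g s) (Set.Icc t₀ T) :=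
      intervalIntegral.continuousOn_primitive hicc
    have h2 : ContinuousOn (fun x => ∫ s in t₀..x, g s) (Set.Icc t₀ T) := by
      refine h1.congr fun x hx => ?_
      rw [intervalIntegral.integral_of_le hx.1]
    have h3 : ContinuousOn H (Set.Icc t₀ T) := continuousOn_const.add h2
    exact (h3.aestronglyMeasurable measurableSet_Icc).mono_measure
      (Measure.restrict_mono Set.Ioc_subset_Icc_self le_rfl)
  -- F *ᵥ φ = H a.e.
  have hFφae : ∀ᵐ t ∂μ, F *ᵥ φ t = H t := by
    have hFcont : Continuous fun x : Fin n → ℝ => F *ᵥ x :=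
      continuous_mulVecPair.comp (continuous_const.prodMk continuous_id)
    set FM : ℝ := ∑ i, ∑ j, |F i j| with hFMdef
    have hFM0 : 0 ≤ FM := Finset.sum_nonneg fun i _ => Finset.sum_nonneg fun j _ => abs_nonneg _
    have s1b : ∀ k, eLpNorm (fun t => F *ᵥ φ t - F *ᵥ φs k t) 2 μ
        ≤ (FM.toNNReal : ENNReal) * eLpNorm (fun t => φs k t - φ t) 2 μ := by
      intro k
      have := eLpNorm_le_nnreal_smul_eLpNorm_of_ae_le_mul (μ := μ)
        (f := fun t => F *ᵥ φ t - F *ᵥ φs k t) (g := fun t => φs k t - φ t)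
        (c := FM.toNNReal) ?_ 2
      · simpa [ENNReal.smul_def] using this
      · refine Eventually.of_forall fun t => ?_
        have h1 : ‖F *ᵥ (φ t - φs k t)‖ ≤ FM * ‖φ t - φs k t‖ := mulVec_norm_le F _
        rw [Matrix.mulVec_sub] at h1
        rw [← NNReal.coe_le_coe]
        push_cast
        rw [norm_sub_rev (φs k t) (φ t)]
        simpa [Real.coe_toNNReal FM hFM0] using h1
    have s1 : Tendsto (fun k => eLpNorm (fun t => F *ᵥ φ t - F *ᵥ φs k t) 2 μ) atTop (nhds 0) := by
      have hmul : Tendsto (fun k => (FM.toNNReal : ENNReal) * eLpNorm (fun t => φs k t - φ t) 2 μ)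
          atTop (nhds 0) := by
        simpa using ENNReal.Tendsto.const_mul e1 (Or.inr ENNReal.coe_ne_top)
      exact tendsto_of_tendsto_of_tendsto_of_le_of_le tendsto_const_nhds hmul
        (fun k => zero_le) s1b
    set c2 : ENNReal := (μ Set.univ) ^ ((2:ENNReal).toReal)⁻¹ with hc2def
    have hc2 : c2 ≠ ⊤ :=
      (ENNReal.rpow_lt_top_of_nonneg (by norm_num) (measure_ne_top μ _)).ne
    have s2b : ∀ k, eLpNorm (fun t => F *ᵥ φs k t - H t) 2 μ
        ≤ c2 * ENNReal.ofReal (‖F *ᵥ φs k t₀ - f₀‖ + A k) := by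
      intro k
      refine eLpNorm_le_of_ae_bound ?_
      filter_upwards [haeIcc] with t htt
      have hdec : F *ᵥ φs k t - H t
          = (F *ᵥ φs k t₀ - f₀) + ((∫ s in t₀..t, gs k s) - ∫ s in t₀..t, g s) := by
        rw [(hWF k).2.2 t htt, hHdef]
        beta_reduce
        abel
      rw [hdec]
      exact (norm_add_le _ _).trans (add_le_add le_rfl (hAbound k t htt))
    have s2 : Tendsto (fun k => c2 * ENNReal.ofReal (‖F *ᵥ φs k t₀ - f₀‖ + A k)) atTop (nhds 0) := by
      have hr : Tendsto (fun k => ‖F *ᵥ φs k t₀ - f₀‖ + A k) atTop (nhds 0) := by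
        have := (tendsto_iff_norm_sub_tendsto_zero.1 hf₀conv).add hA
        simpa using this
      have := ENNReal.Tendsto.const_mul (ENNReal.tendsto_ofReal hr) (Or.inr hc2)
      simpa using this
    have hkey : eLpNorm (fun t => F *ᵥ φ t - H t) 2 μ = 0 := by
      have hble : ∀ k, eLpNorm (fun t => F *ᵥ φ t - H t) 2 μ
          ≤ eLpNorm (fun t => F *ᵥ φ t - F *ᵥ φs k t) 2 μ
            + eLpNorm (fun t => F *ᵥ φs k t - H t) 2 μ := by
        intro k
        have hdecomp : (fun t => F *ᵥ φ t - H t)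
            = fun t => (F *ᵥ φ t - F *ᵥ φs k t) + (F *ᵥ φs k t - H t) := by
          funext t; abel
        rw [hdecomp]
        exact eLpNorm_add_le
          ((hFcont.comp_aestronglyMeasurable hφ.aestronglyMeasurable).sub
            (hFcont.comp_aestronglyMeasurable (hWF k).1.aestronglyMeasurable))
          ((hFcont.comp_aestronglyMeasurable (hWF k).1.aestronglyMeasurable).sub hHm) one_le_two
      have hsum : Tendsto (fun k => eLpNorm (fun t => F *ᵥ φ t - F *ᵥ φs k t) 2 μ
          + eLpNorm (fun t => F *ᵥ φs k t - H t) 2 μ) atTop (nhds 0) := by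
        have hb2 : ∀ k, eLpNorm (fun t => F *ᵥ φs k t - H t) 2 μ
            ≤ c2 * ENNReal.ofReal (‖F *ᵥ φs k t₀ - f₀‖ + A k) := s2b
        have s2' : Tendsto (fun k => eLpNorm (fun t => F *ᵥ φs k t - H t) 2 μ) atTop (nhds 0) :=
          tendsto_of_tendsto_of_tendsto_of_le_of_le tendsto_const_nhds s2
            (fun k => zero_le) hb2
        simpa using s1.add s2'
      have hle0 : eLpNorm (fun t => F *ᵥ φ t - H t) 2 μ ≤ 0 :=
        ge_of_tendsto' hsum hble
      exact le_antisymm hle0 zero_le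
    have hmeas : AEStronglyMeasurable (fun t => F *ᵥ φ t - H t) μ :=
      (hFcont.comp_aestronglyMeasurable hφ.aestronglyMeasurable).sub hHm
    have := (eLpNorm_eq_zero_iff hmeas (by norm_num)).1 hkey
    filter_upwards [this] with t htt
    exact sub_eq_zero.1 htt
  -- construction of ψ
  set ψ : ℝ → Fin n → ℝ := fun t =>
    if h : t ∈ Set.Icc t₀ T ∧ F *ᵥ φ t ≠ H t then (hrange t h.1).choose else φ t with hψdef
  have hψφ : ∀ᵐ t ∂μ, ψ t = φ t := by
    filter_upwards [hFφae] with t htt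
    simp only [hψdef]
    rw [dif_neg (by simp [htt])]
  have hFψ : ∀ t ∈ Set.Icc t₀ T, F *ᵥ ψ t = H t := by
    intro t htt
    by_cases h : t ∈ Set.Icc t₀ T ∧ F *ᵥ φ t ≠ H t
    · simp only [hψdef]; rw [dif_pos h]; exact (hrange t h.1).choose_spec
    · simp only [hψdef]; rw [dif_neg h]
      push_neg at h
      exact h htt
  have hHt₀ : H t₀ = f₀ := by simp [hHdef]
  refine ⟨ψ, g, hψφ, ⟨hφ.ae_eq (hψφ.mono fun t h => h.symm), hg, ?_⟩, ?_, ?_⟩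
  · intro t htt
    rw [hFψ t htt, hFψ t₀ ⟨le_refl _, ht.le⟩, hHt₀]
  · filter_upwards [hψφ] with t htt
    rw [htt, hgdef]
    simp
  · rw [hFψ t₀ ⟨le_refl _, ht.le⟩, hHt₀]
end

section
/- Let $L:\mathcal{H}\to\mathcal{F}$ be a closed densely defined linear operator between Hilbert spaces and let $\mathscr{G}\subset\mathcal{F}$ be convex, closed, bounded, balanced with $0\in\operatorname{int}\mathscr{G}$. Define $c(\mathscr{G},z)=\sup_{f\in\mathscr{G}}(z,f)$ and $(L^*c)(u)=\inf\{c(\mathscr{G},z): L^*z=u\}$. Then $R(L^*)\subset\operatorname{dom}\operatorname{cl}(L^*c)\subset\overline{R(L^*)}$, where $\operatorname{cl}$ denotes the lower-semicontinuous convex closure (biconjugate). -/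
open LinearPMap

variable {H F : Type*}
  [NormedAddCommGroup H] [InnerProductSpace ℝ H] [CompleteSpace H]
  [NormedAddCommGroup F] [InnerProductSpace ℝ F] [CompleteSpace F]

/-- The support function `c(G, z) = sup_{f ∈ G} (z, f)`, with values in `EReal`. -/
noncomputable def supportFn (G : Set F) (z : F) : EReal :=
  ⨆ f ∈ G, ((inner ℝ z f : ℝ) : EReal)

/-- The Fenchel conjugate `f*(y) = sup_x ((y, x) - f(x))` of an `EReal`-valued function. -/
noncomputable def conjFn {E : Type*} [NormedAddCommGroup E] [InnerProductSpace ℝ E]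
    (f : E → EReal) (y : E) : EReal :=
  ⨆ x, (((inner ℝ y x : ℝ) : EReal) - f x)

/-- The lower semicontinuous convex closure `cl f = f**`. -/
noncomputable def clFn {E : Type*} [NormedAddCommGroup E] [InnerProductSpace ℝ E]
    (f : E → EReal) : E → EReal :=
  conjFn (conjFn f)

/-- The effective domain of an `EReal`-valued function. -/
def domFn {E : Type*} (f : E → EReal) : Set E := {x | f x < ⊤}

/-- `(L*c)(u) = inf {c(G, z) : z ∈ 𝒟(L*), L*z = u}` (`+∞` if no such `z` exists). -/
noncomputable def LstarC (L : H →ₗ.[ℝ] F) (G : Set F) (u : H) : EReal :=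
  ⨅ z ∈ {z : (L†).domain | L† z = u}, supportFn G (z : F)

/-- if `L` is a closed densely defined operator and `𝒢` is convex, closed, bounded,
balanced with `0 ∈ int 𝒢`, then `R(L*) ⊆ dom cl(L*c) ⊆ closure R(L*)`. -/
theorem range_adjoint_subset_dom_cl (L : H →ₗ.[ℝ] F)
    (hLclosed : L.IsClosed) (hLdense : Dense (L.domain : Set H))
    (G : Set F) (hGconv : Convex ℝ G) (hGclosed : IsClosed G)
    (hGbdd : Bornology.IsBounded G) (hGbal : Balanced ℝ G)
    (hG0 : (0 : F) ∈ interior G) :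
    Set.range (fun z : (L†).domain => L† z) ⊆ domFn (clFn (LstarC L G)) ∧
      domFn (clFn (LstarC L G)) ⊆ closure (Set.range (fun z : (L†).domain => L† z)) := by
  classical
  have h0G : (0 : F) ∈ G := interior_subset hG0
  -- support function is nonnegative
  have hsupp_nonneg : ∀ z : F, (0 : EReal) ≤ supportFn G z := by
    intro z
    have h := le_iSup₂ (f := fun (f : F) (_ : f ∈ G) => ((inner ℝ z f : ℝ) : EReal)) 0 h0G
    simpa [supportFn] using h
  -- support function is bounded above by M * ‖z‖
  obtain ⟨M, hM⟩ := hGbdd.exists_norm_le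
  have hsupp_bdd : ∀ z : F, supportFn G z ≤ ((M * ‖z‖ : ℝ) : EReal) := by
    intro z
    refine iSup₂_le fun f hf => ?_
    have h1 : (inner ℝ z f : ℝ) ≤ ‖z‖ * ‖f‖ := real_inner_le_norm z f
    have h2 : ‖z‖ * ‖f‖ ≤ M * ‖z‖ := by
      rw [mul_comm M ‖z‖]
      exact mul_le_mul_of_nonneg_left (hM f hf) (norm_nonneg z)
    exact_mod_cast h1.trans h2
  -- LstarC is nonnegative
  have hf_nonneg : ∀ u : H, (0 : EReal) ≤ LstarC L G u := fun u =>
    le_iInf₂ fun z _ => hsupp_nonneg z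
  -- LstarC = ⊤ off the range of L†
  have hf_top : ∀ u : H, u ∉ Set.range (fun z : (L†).domain => L† z) →
      LstarC L G u = ⊤ := by
    intro u hu
    have hempty : {z : (L†).domain | L† z = u} = ∅ := by
      ext z
      simp only [Set.mem_setOf_eq, Set.mem_empty_iff_false, iff_false]
      exact fun hz => hu ⟨z, hz⟩
    simp [LstarC, hempty]
  constructor
  · -- first inclusion
    rintro u ⟨z, rfl⟩
    have hmem : z ∈ {z : (L†).domain | L† z = L† z} := rfl
    have hle : LstarC L G (L† z) ≤ supportFn G (z : F) := by
      unfold LstarC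
      exact iInf₂_le (f := fun (z' : (L†).domain) (_ : z' ∈ {z' : (L†).domain | L† z' = L† z}) =>
        supportFn G (z' : F)) z hmem
    have hlt : LstarC L G (L† z) < ⊤ :=
      lt_of_le_of_lt (hle.trans (hsupp_bdd z)) (EReal.coe_lt_top _)
    -- f u is a real number r
    set u := L† z with hu
    have hne_top : LstarC L G u ≠ ⊤ := hlt.ne
    have hne_bot : LstarC L G u ≠ ⊥ := ne_bot_of_le_ne_bot (by simp) (hf_nonneg u)
    set r : ℝ := (LstarC L G u).toReal with hr
    have hfr : LstarC L G u = (r : EReal) := (EReal.coe_toReal hne_top hne_bot).symm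
    have key : ∀ y : H, ((inner ℝ u y : ℝ) : EReal) - conjFn (LstarC L G) y ≤ (r : EReal) := by
      intro y
      have h1 : ((inner ℝ y u : ℝ) : EReal) - LstarC L G u ≤ conjFn (LstarC L G) y :=
        le_iSup (fun x => ((inner ℝ y x : ℝ) : EReal) - LstarC L G x) u
      rw [hfr] at h1
      have h1' : (((inner ℝ y u : ℝ) - r : ℝ) : EReal) ≤ conjFn (LstarC L G) y := by
        rw [EReal.coe_sub]; exact h1
      calc ((inner ℝ u y : ℝ) : EReal) - conjFn (LstarC L G) y
          ≤ ((inner ℝ u y : ℝ) : EReal) - (((inner ℝ y u : ℝ) - r : ℝ) : EReal) :=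
            EReal.sub_le_sub le_rfl h1'
        _ = (r : EReal) := by
            rw [← EReal.coe_sub, EReal.coe_eq_coe_iff, real_inner_comm u y]; ring
    have : clFn (LstarC L G) u ≤ (r : EReal) := iSup_le key
    exact lt_of_le_of_lt this (EReal.coe_lt_top r)
  · -- second inclusion
    intro u hu
    set R : Submodule ℝ H := LinearMap.range (L†).toFun with hR
    have hrange : Set.range (fun z : (L†).domain => L† z) = (R : Set H) := by
      ext x; simp [hR, LinearMap.mem_range]
    rw [hrange, ← Submodule.topologicalClosure_coe, ← Submodule.orthogonal_orthogonal_eq_closure]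
    rw [SetLike.mem_coe, Submodule.mem_orthogonal]
    intro w hw
    by_contra hne
    -- conjFn (LstarC L G) (t • w) ≤ 0 for all t
    have hconj : ∀ t : ℝ, conjFn (LstarC L G) (t • w) ≤ (0 : EReal) := by
      intro t
      refine iSup_le fun x => ?_
      by_cases hx : x ∈ Set.range (fun z : (L†).domain => L† z)
      · have hxR : x ∈ R := by rw [← SetLike.mem_coe, ← hrange]; exact hx
        have hinner : (inner ℝ (t • w) x : ℝ) = 0 := by
          have h0 : (inner ℝ x w : ℝ) = 0 := hw x hxR
          have h0' : (inner ℝ w x : ℝ) = 0 := by rw [real_inner_comm]; exact h0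
          rw [real_inner_smul_left, h0', mul_zero]
        rw [hinner]
        calc ((0 : ℝ) : EReal) - LstarC L G x ≤ ((0 : ℝ) : EReal) - (0 : EReal) :=
              EReal.sub_le_sub le_rfl (hf_nonneg x)
          _ = 0 := by norm_num
      · rw [hf_top x hx, EReal.sub_top]; exact bot_le
    -- clFn at u dominates t * ⟪u, w⟫ for all t
    have hlb : ∀ t : ℝ, ((t * (inner ℝ u w : ℝ) : ℝ) : EReal) ≤ clFn (LstarC L G) u := by
      intro t
      have h1 : ((inner ℝ u (t • w) : ℝ) : EReal) - conjFn (LstarC L G) (t • w) ≤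
          clFn (LstarC L G) u :=
        le_iSup (fun y => ((inner ℝ u y : ℝ) : EReal) - conjFn (LstarC L G) y) (t • w)
      have h2 : ((inner ℝ u (t • w) : ℝ) : EReal) - (0 : EReal) ≤
          ((inner ℝ u (t • w) : ℝ) : EReal) - conjFn (LstarC L G) (t • w) :=
        EReal.sub_le_sub le_rfl (hconj t)
      have h3 : ((inner ℝ u (t • w) : ℝ) : EReal) - (0 : EReal) =
          ((t * (inner ℝ u w : ℝ) : ℝ) : EReal) := by
        rw [real_inner_smul_right]; norm_num
      rw [h3] at h2
      exact h2.trans h1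
    -- hence clFn (LstarC L G) u = ⊤
    have hcuw : (inner ℝ u w : ℝ) ≠ 0 := by
      rw [real_inner_comm]; exact hne
    have htop : clFn (LstarC L G) u = ⊤ := by
      rw [EReal.eq_top_iff_forall_lt]
      intro s
      have := hlb ((s + 1) / (inner ℝ u w : ℝ))
      rw [div_mul_cancel₀ _ hcuw] at this
      exact lt_of_lt_of_le (by exact_mod_cast lt_add_one s) this
    have hu' : clFn (LstarC L G) u < ⊤ := hu
    rw [htop] at hu'
    exact lt_irrefl _ hu'
end

section
/- Let $L:\mathcal{H}\to\mathcal{F}$ be closed densely defined and $H\in\mathscr{L}(\mathcal{H},\mathcal{Y})$ bounded, with $R(L)$ and $H(N(L))$ closed, or with $R(T)=\{[Lx,Hx]:x\in\mathscr{D}(L)\}$ closed. Then the system $L^*\hat z = \ell - H^*H\hat p$, $L\hat p = \hat z$ has a solution $\hat z\in\mathscr{D}(L^*)$, $\hat p\in\mathscr{D}(L)$ if and only if $\ell = L^*z + H^*u$ for some $z\in\mathscr{D}(L^*)$, $u\in\mathcal{Y}$, i.e. $\ell\in R(L^*)+R(H^*)$. -/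
open LinearPMap RealInnerProductSpace

variable {H F Y : Type*}
  [NormedAddCommGroup H] [InnerProductSpace ℝ H] [CompleteSpace H]
  [NormedAddCommGroup F] [InnerProductSpace ℝ F] [CompleteSpace F]
  [NormedAddCommGroup Y] [InnerProductSpace ℝ Y] [CompleteSpace Y]

lemma pair_range_closed (L : H →ₗ.[ℝ] F) (hLclosed : L.IsClosed) (Hop : H →L[ℝ] Y)
    (hR : IsClosed (Set.range fun x : L.domain => L x))
    (hN : IsClosed (Hop '' {x : H | ∃ hx : x ∈ L.domain, L ⟨x, hx⟩ = 0})) :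
    IsClosed {p : F × Y | ∃ x : L.domain, p = (L x, Hop x)} := by
  haveI : CompleteSpace L.graph := hLclosed.completeSpace_coe
  set π : L.graph →L[ℝ] F := (ContinuousLinearMap.snd ℝ H F).comp L.graph.subtypeL with hπdef
  -- facts about graph elements
  have hgr : ∀ g : L.graph, ∃ h : (g : H × F).1 ∈ L.domain,
      L ⟨(g : H × F).1, h⟩ = (g : H × F).2 := by
    intro g
    obtain ⟨y, h1, h2⟩ := L.mem_graph_iff.mp g.2
    refine ⟨h1 ▸ y.2, ?_⟩
    have : (⟨(g : H × F).1, h1 ▸ y.2⟩ : L.domain) = y := Subtype.ext h1.symm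
    rw [this, h2]
  have hπ : ∀ g : L.graph, π g = (g : H × F).2 := fun g => rfl
  -- range of π is the (closed) range of L
  set Rng : Submodule ℝ F := LinearMap.range (π : L.graph →ₗ[ℝ] F) with hRngdef
  have hRngset : (Rng : Set F) = Set.range fun x : L.domain => L x := by
    ext f
    constructor
    · rintro ⟨g, rfl⟩
      obtain ⟨h, hLg⟩ := hgr g
      exact ⟨⟨(g : H × F).1, h⟩, hLg⟩
    · rintro ⟨x, rfl⟩
      exact ⟨⟨((x : H), L x), L.mem_graph x⟩, rfl⟩
  have hRngclosed : IsClosed (Rng : Set F) := hRngset ▸ hR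
  haveI : CompleteSpace Rng := hRngclosed.completeSpace_coe
  set π' : L.graph →L[ℝ] Rng := π.codRestrict Rng (fun g => LinearMap.mem_range_self _ g)
    with hπ'def
  have hsurj : Function.Surjective π' := by
    rintro ⟨f, g, rfl⟩
    exact ⟨g, rfl⟩
  obtain ⟨C, hC0, hC⟩ := π'.exists_preimage_norm_le hsurj
  -- sequential closedness
  apply IsSeqClosed.isClosed
  intro s p hs hp
  choose x hx using hs
  have hfst : ∀ n, (s n).1 = L (x n) := fun n => by rw [hx n]
  have hsnd : ∀ n, (s n).2 = Hop (x n) := fun n => by rw [hx n]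
  have htf : Filter.Tendsto (fun n => L (x n)) Filter.atTop (nhds p.1) := by
    have h1 := (continuous_fst.tendsto p).comp hp
    have : (fun n => (s n).1) = fun n => L (x n) := funext hfst
    rwa [Function.comp_def, this] at h1
  have hty : Filter.Tendsto (fun n => Hop (x n)) Filter.atTop (nhds p.2) := by
    have h1 := (continuous_snd.tendsto p).comp hp
    have : (fun n => (s n).2) = fun n => Hop (x n) := funext hsnd
    rwa [Function.comp_def, this] at h1
  -- p.1 is in the range of L
  obtain ⟨xb, hxb'⟩ : p.1 ∈ Set.range fun x : L.domain => L x :=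
    hR.mem_of_tendsto htf (Filter.Eventually.of_forall fun n => ⟨x n, rfl⟩)
  have hxb : L xb = p.1 := hxb'
  set gb : L.graph := ⟨((xb : H), p.1), by rw [← hxb]; exact L.mem_graph xb⟩ with hgbdef
  -- controlled preimages of L (x n) - p.1
  have hmemRng : ∀ n, L (x n) - p.1 ∈ Rng := by
    intro n
    rw [hRngdef]
    have h1 : L (x n) ∈ Rng := by rw [hRngdef]; exact ⟨⟨((x n : H), L (x n)), L.mem_graph _⟩, rfl⟩
    have h2 : p.1 ∈ Rng := by rw [hRngdef, ← hxb]; exact ⟨⟨((xb : H), L xb), L.mem_graph _⟩, rfl⟩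
    exact sub_mem h1 h2
  have hδ : ∀ n, ∃ g : L.graph, π' g = ⟨L (x n) - p.1, hmemRng n⟩ ∧
      ‖g‖ ≤ C * ‖L (x n) - p.1‖ := fun n => hC ⟨L (x n) - p.1, hmemRng n⟩
  choose δ hδ1 hδ2 using hδ
  have hδ1' : ∀ n, (δ n : H × F).2 = L (x n) - p.1 := by
    intro n
    have := congrArg (Subtype.val) (hδ1 n)
    simpa [hπ'def, hπ] using this
  have hδ0 : Filter.Tendsto δ Filter.atTop (nhds 0) := by
    apply squeeze_zero_norm hδ2
    have : Filter.Tendsto (fun n => ‖L (x n) - p.1‖) Filter.atTop (nhds 0) := by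
      rw [← tendsto_iff_norm_sub_tendsto_zero] at *
      exact htf
    simpa using this.const_mul C
  set gseq : ℕ → L.graph := fun n => gb + δ n with hgseqdef
  have hgseq : Filter.Tendsto gseq Filter.atTop (nhds gb) := by
    simpa using tendsto_const_nhds.add hδ0
  set w : ℕ → H := fun n => ((gseq n : H × F)).1 with hwdef
  have hwt : Filter.Tendsto w Filter.atTop (nhds (xb : H)) := by
    have : Filter.Tendsto (fun n => (gseq n : L.graph)) Filter.atTop (nhds gb) := hgseq
    exact (continuous_fst.comp continuous_subtype_val).continuousAt.tendsto.comp this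
  have hgsnd : ∀ n, ((gseq n : H × F)).2 = L (x n) := by
    intro n
    show ((gb : H × F) + (δ n : H × F)).2 = L (x n)
    rw [Prod.snd_add, hδ1']
    show p.1 + (L (x n) - p.1) = L (x n)
    abel
  -- w n ∈ domain with L (w n) = L (x n)
  have hwmem : ∀ n, ∃ h : w n ∈ L.domain, L ⟨w n, h⟩ = L (x n) := by
    intro n
    obtain ⟨h, hL⟩ := hgr (gseq n)
    exact ⟨h, by rw [hL, hgsnd n]⟩
  choose hwdom hwL using hwmem
  -- the kernel elements
  have hker : ∀ n, (x n : H) - w n ∈ {x : H | ∃ hx : x ∈ L.domain, L ⟨x, hx⟩ = 0} := by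
    intro n
    refine ⟨sub_mem (x n).2 (hwdom n), ?_⟩
    have heq : (⟨(x n : H) - w n, sub_mem (x n).2 (hwdom n)⟩ : L.domain)
        = x n - ⟨w n, hwdom n⟩ := rfl
    rw [heq, L.map_sub, hwL n, sub_self]
  have hHn : Filter.Tendsto (fun n => Hop ((x n : H) - w n)) Filter.atTop
      (nhds (p.2 - Hop (xb : H))) := by
    simp only [_root_.map_sub]
    exact hty.sub (Hop.continuous.continuousAt.tendsto.comp hwt)
  obtain ⟨n0, hn0mem, hn0⟩ : p.2 - Hop (xb : H) ∈
      Hop '' {x : H | ∃ hx : x ∈ L.domain, L ⟨x, hx⟩ = 0} :=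
    hN.mem_of_tendsto hHn (Filter.Eventually.of_forall fun n =>
      ⟨(x n : H) - w n, hker n, rfl⟩)
  obtain ⟨hn0dom, hn0L⟩ := hn0mem
  refine ⟨⟨(xb : H) + n0, add_mem xb.2 hn0dom⟩, ?_⟩
  have heq : (⟨(xb : H) + n0, add_mem xb.2 hn0dom⟩ : L.domain) = xb + ⟨n0, hn0dom⟩ := rfl
  rw [Prod.ext_iff]
  constructor
  · show p.1 = L _
    rw [heq, L.map_add, hxb, hn0L, add_zero]
  · show p.2 = Hop ((xb : H) + n0)
    rw [_root_.map_add, hn0]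
    abel

/-- let `L` be closed and densely defined, `H` bounded, with `R(L)` and `H(N(L))`
closed, or with `{[Lx, Hx] : x ∈ 𝒟(L)}` closed.  Then the Euler system
`L*ẑ = ℓ - H*Hp̂`, `Lp̂ = ẑ` is solvable iff `ℓ ∈ R(L*) + R(H*)`. -/
theorem euler_system_solvable_iff (L : H →ₗ.[ℝ] F)
    (hLclosed : L.IsClosed) (hLdense : Dense (L.domain : Set H))
    (Hop : H →L[ℝ] Y)
    (hcond :
      (IsClosed (Set.range fun x : L.domain => L x) ∧
        IsClosed (Hop '' {x : H | ∃ hx : x ∈ L.domain, L ⟨x, hx⟩ = 0})) ∨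
      IsClosed {p : F × Y | ∃ x : L.domain, p = (L x, Hop x)})
    (ℓ : H) :
    (∃ (zhat : (L†).domain) (phat : L.domain),
        L† zhat = ℓ - (ContinuousLinearMap.adjoint Hop) (Hop phat) ∧
        L phat = (zhat : F)) ↔
      ∃ (z : (L†).domain) (u : Y), ℓ = L† z + (ContinuousLinearMap.adjoint Hop) u := by
  constructor
  · rintro ⟨zhat, phat, h1, h2⟩
    exact ⟨zhat, Hop phat, by rw [h1, sub_add_cancel]⟩
  · rintro ⟨z, u, hzu⟩
    have hSclosed : IsClosed {p : F × Y | ∃ x : L.domain, p = (L x, Hop x)} := by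
      rcases hcond with ⟨h1, h2⟩ | h
      · exact pair_range_closed L hLclosed Hop h1 h2
      · exact h
    -- work in the L2 product
    set T : L.domain →ₗ[ℝ] WithLp 2 (F × Y) :=
      { toFun := fun x => (WithLp.equiv 2 (F × Y)).symm (L x, Hop x)
        map_add' := fun a b => by
          apply (WithLp.equiv 2 (F × Y)).injective
          simp [Prod.ext_iff, LinearPMap.map_add]
        map_smul' := fun c a => by
          apply (WithLp.equiv 2 (F × Y)).injective
          simp [Prod.ext_iff, LinearPMap.map_smul] } with hTdef
    have hTfst : ∀ x : L.domain, (T x).fst = L x := fun x => rfl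
    have hTsnd : ∀ x : L.domain, (T x).snd = Hop x := fun x => rfl
    set S : Submodule ℝ (WithLp 2 (F × Y)) := LinearMap.range T with hSdef
    have hS : IsClosed (S : Set (WithLp 2 (F × Y))) := by
      have heq : (S : Set (WithLp 2 (F × Y))) =
          (WithLp.prodContinuousLinearEquiv 2 ℝ F Y) ⁻¹'
            {p : F × Y | ∃ x : L.domain, p = (L x, Hop x)} := by
        ext a
        constructor
        · rintro ⟨x, rfl⟩
          exact ⟨x, rfl⟩
        · rintro ⟨x, hxa⟩
          exact ⟨x, by
            apply (WithLp.prodContinuousLinearEquiv 2 ℝ F Y).injective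
            exact hxa.symm⟩
      rw [heq]
      exact hSclosed.preimage (WithLp.prodContinuousLinearEquiv 2 ℝ F Y).continuous
    haveI : CompleteSpace S := hS.completeSpace_coe
    set v : WithLp 2 (F × Y) := (WithLp.equiv 2 (F × Y)).symm ((z : F), u) with hvdef
    obtain ⟨phat, hphat⟩ : ∃ x : L.domain, T x = (S.orthogonalProjectionOnto v : WithLp 2 (F × Y)) :=
      (S.orthogonalProjectionOnto v).2
    have horth := Submodule.sub_starProjection_mem_orthogonal (K := S) v
    have hkey : ∀ x : L.domain,
        ⟪L x, (z : F) - L phat⟫ + ⟪Hop x, u - Hop phat⟫ = 0 := by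
      intro x
      have h1 : (inner ℝ (T x) (v - T phat) : ℝ) = 0 := by
        rw [hphat]
        exact (Submodule.mem_orthogonal S _).mp horth (T x) ⟨x, rfl⟩
      rw [WithLp.prod_inner_apply] at h1
      have hf : (v - T phat).fst = (z : F) - L phat := rfl
      have hs2 : (v - T phat).snd = u - Hop phat := rfl
      change ⟪L x, (z : F) - L phat⟫ + ⟪Hop x, u - Hop phat⟫ = 0 at h1
      exact h1
    -- the adjoint relation
    have hc : ∀ x : L.domain,
        ⟪(ContinuousLinearMap.adjoint Hop) (Hop phat - u), (x : H)⟫ =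
          ⟪(z : F) - L phat, L x⟫ := by
      intro x
      rw [ContinuousLinearMap.adjoint_inner_left]
      have h1 := hkey x
      have h2 : ⟪Hop phat - u, Hop (x : H)⟫ = -⟪Hop (x : H), u - Hop phat⟫ := by
        rw [real_inner_comm, ← inner_neg_right, neg_sub]
      have h3 : ⟪(z : F) - L phat, L x⟫ = ⟪L x, (z : F) - L phat⟫ := real_inner_comm _ _
      rw [h2, h3]
      linarith
    have hwmem : ((z : F) - L phat) ∈ (L†).domain :=
      mem_adjoint_domain_of_exists _
        ⟨(ContinuousLinearMap.adjoint Hop) (Hop phat - u), hc⟩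
    set w : (L†).domain := ⟨(z : F) - L phat, hwmem⟩ with hwdef
    have hw : L† w = (ContinuousLinearMap.adjoint Hop) (Hop phat - u) :=
      adjoint_apply_eq hLdense w hc
    refine ⟨z - w, phat, ?_, ?_⟩
    · rw [LinearPMap.map_sub, hw]
      have hLz : L† z = ℓ - (ContinuousLinearMap.adjoint Hop) u := by
        rw [hzu]; abel
      rw [hLz, _root_.map_sub]
      abel
    · show L phat = ((z : F) - ((z : F) - L phat))
      abel
end

section
/- Under the hypotheses that $\mathscr{G}=\{f\in\mathcal{F}:(f,f)\le 1\}$, $\eta$ ranges over random vectors with $M(\eta,\eta)\le 1$, and $R(L)$, $H(N(L))$ closed (or the graph-range $\{[Lx,Hx]\}$ closed), the minimax mean-squared error in direction $\ell$ satisfies $\hat\sigma(\ell)^2 = (\ell,\hat p)$, where $(\hat z,\hat p)$ solves $L^*\hat z=\ell-H^*H\hat p$, $L\hat p=\hat z$, and the minimizing $\hat u$ equals $H\hat p$, provided $\ell\in R(L^*)+R(H^*)$. -/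
open LinearPMap

variable {H F Y : Type*}
  [NormedAddCommGroup H] [InnerProductSpace ℝ H] [CompleteSpace H]
  [NormedAddCommGroup F] [InnerProductSpace ℝ F] [CompleteSpace F]
  [NormedAddCommGroup Y] [InnerProductSpace ℝ Y] [CompleteSpace Y]

/-- The worst-case mean-squared error of the linear estimator `u` in the direction `ℓ` for the
unit-ball bounding sets:  `σ(ℓ, u) = (u,u) + min { c²(𝒢,z) = ‖z‖² : z ∈ 𝒟(L*), L*z = ℓ - H*u }`
(`+∞` if no such `z` exists). -/
noncomputable def sigmaErr (L : H →ₗ.[ℝ] F) (Hop : H →L[ℝ] Y) (ℓ : H) (u : Y) : EReal :=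
  ((‖u‖ ^ 2 : ℝ) : EReal) +
    ⨅ z ∈ {z : (L†).domain | L† z = ℓ - (ContinuousLinearMap.adjoint Hop) u},
      ((‖(z : F)‖ ^ 2 : ℝ) : EReal)

/-- with `𝒢` the unit ball, `M(η,η) ≤ 1`, and the closedness conditions, for
`ℓ ∈ R(L*) + R(H*)` the minimax mean-squared error satisfies `σ̂(ℓ)² = (ℓ, p̂)` and the optimal
estimator is `û = Hp̂`, where `(ẑ, p̂)` solves `L*ẑ = ℓ - H*Hp̂`, `Lp̂ = ẑ`. -/
theorem minimax_error_eq (L : H →ₗ.[ℝ] F)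
    (hLclosed : L.IsClosed) (hLdense : Dense (L.domain : Set H))
    (Hop : H →L[ℝ] Y)
    (hcond :
      (IsClosed (Set.range fun x : L.domain => L x) ∧
        IsClosed (Hop '' {x : H | ∃ hx : x ∈ L.domain, L ⟨x, hx⟩ = 0})) ∨
      IsClosed {p : F × Y | ∃ x : L.domain, p = (L x, Hop x)})
    (ℓ : H)
    (hℓ : ∃ (z : (L†).domain) (u : Y), ℓ = L† z + (ContinuousLinearMap.adjoint Hop) u)
    (zhat : (L†).domain) (phat : L.domain)
    (hsys₁ : L† zhat = ℓ - (ContinuousLinearMap.adjoint Hop) (Hop phat))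
    (hsys₂ : L phat = (zhat : F)) :
    (⨅ u : Y, sigmaErr L Hop ℓ u) = sigmaErr L Hop ℓ (Hop phat) ∧
      sigmaErr L Hop ℓ (Hop phat) = ((inner ℝ ℓ (phat : H) : ℝ) : EReal) := by
  have hadj := adjoint_isFormalAdjoint hLdense
  -- key identity: for any z, u with L† z = ℓ - H* u,
  --   ⟪z, zhat⟫ + ⟪u, Hop phat⟫ = ⟪ℓ, phat⟫
  have key : ∀ (z : (L†).domain) (u : Y),
      L† z = ℓ - (ContinuousLinearMap.adjoint Hop) u →
      (inner ℝ (z : F) (zhat : F) : ℝ) + inner ℝ u (Hop phat) = inner ℝ ℓ (phat : H) := by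
    intro z u hz
    have h1 : (inner ℝ (L† z) (phat : H) : ℝ) = inner ℝ (z : F) (zhat : F) := by
      rw [hadj z phat, hsys₂]
    have h2 : (inner ℝ ((ContinuousLinearMap.adjoint Hop) u) (phat : H) : ℝ)
        = inner ℝ u (Hop phat) := ContinuousLinearMap.adjoint_inner_left _ _ _
    have := congrArg (fun w => (inner ℝ w (phat : H) : ℝ)) hz
    simp only [inner_sub_left] at this
    rw [h1, h2] at this
    linarith
  set A : ℝ := ‖(zhat : F)‖ ^ 2 with hA
  set B : ℝ := ‖Hop phat‖ ^ 2 with hB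
  have hAB : (inner ℝ ℓ (phat : H) : ℝ) = A + B := by
    have := key zhat (Hop phat) hsys₁
    rw [real_inner_self_eq_norm_sq, real_inner_self_eq_norm_sq] at this
    linarith
  -- key inequality
  have kineq : ∀ (z : (L†).domain) (u : Y),
      L† z = ℓ - (ContinuousLinearMap.adjoint Hop) u →
      A + B ≤ ‖u‖ ^ 2 + ‖(z : F)‖ ^ 2 := by
    intro z u hz
    have hk := key z u hz
    rw [hAB] at hk
    have c1 : (inner ℝ (z : F) (zhat : F) : ℝ) ≤ ‖(z : F)‖ * ‖(zhat : F)‖ :=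
      real_inner_le_norm _ _
    have c2 : (inner ℝ u (Hop phat) : ℝ) ≤ ‖u‖ * ‖Hop phat‖ := real_inner_le_norm _ _
    nlinarith [sq_nonneg (‖(z : F)‖ - ‖(zhat : F)‖), sq_nonneg (‖u‖ - ‖Hop phat‖)]
  -- sigmaErr at û
  have hval : sigmaErr L Hop ℓ (Hop phat) = ((inner ℝ ℓ (phat : H) : ℝ) : EReal) := by
    have hinf : (⨅ z ∈ {z : (L†).domain |
        L† z = ℓ - (ContinuousLinearMap.adjoint Hop) (Hop phat)},
        ((‖(z : F)‖ ^ 2 : ℝ) : EReal)) = ((A : ℝ) : EReal) := by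
      apply le_antisymm
      · exact iInf₂_le zhat hsys₁
      · refine le_iInf₂ fun z hz => ?_
        have h := kineq z (Hop phat) hz
        have h2 : A ≤ ‖(z : F)‖ ^ 2 := by linarith
        exact_mod_cast h2
    rw [sigmaErr, hinf, hAB, ← hB, ← EReal.coe_add, add_comm]
  refine ⟨le_antisymm (iInf_le _ (Hop phat)) (le_iInf fun u => ?_), hval⟩
  rw [hval, hAB, sigmaErr]
  calc ((A + B : ℝ) : EReal)
      = ((‖u‖ ^ 2 : ℝ) : EReal) + ((A + B - ‖u‖ ^ 2 : ℝ) : EReal) := by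
        rw [← EReal.coe_add]; norm_num
    _ ≤ _ := by
        gcongr
        refine le_iInf₂ fun z hz => ?_
        have h := kineq z u hz
        have h2 : A + B - ‖u‖ ^ 2 ≤ ‖(z : F)‖ ^ 2 := by linarith
        exact_mod_cast h2
end

section
/- Consider the scalar noncausal discrete-time descriptor system $F z_{k+1}=C_k z_k+f_k$, $F z_0=q$, $a_k=H_k z_k+w_k$ with $F=(1,0)$, $C_k=(c_k,1)$, $H_k=(h_k,0)$, $z_k\in\mathbb{R}^2$. Define recursively $P_0=F'SF+H_0'R_0H_0$, $B_k=P_k+C_k'S_kC_k$, $P_{k+1}=H_{k+1}'R_{k+1}H_{k+1}+F'(S_k - S_kC_kB_k^+C_k'S_k)F$, $r_0=H_0'R_0a_0$, $r_{k+1}=F'S_kC_kB_k^+r_k+H_{k+1}'R_{k+1}a_{k+1}$, where $S,S_k,R_k>0$ are scalars. Then for all $k\ge 1$: $P_k = R_k H_k' H_k$ and $r_k = R_k H_k' a_k$. -/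
open Matrix

set_option linter.unreachableTactic false
set_option linter.unusedTactic false
set_option linter.unnecessarySeqFocus false

lemma mp_unique {m n : ℕ} {A : Matrix (Fin m) (Fin n) ℝ} {X Y : Matrix (Fin n) (Fin m) ℝ}
    (hX : IsMPInv A X) (hY : IsMPInv A Y) : X = Y := by
  obtain ⟨hX1, hX2, hX3, hX4⟩ := hX
  obtain ⟨hY1, hY2, hY3, hY4⟩ := hY
  have hAB : A * X = A * Y := by
    calc A * X = (A * X)ᵀ := hX3.symm
    _ = ((A * Y * A) * X)ᵀ := by rw [hY1]
    _ = (A * X)ᵀ * (A * Y)ᵀ := by simp only [transpose_mul, Matrix.mul_assoc]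
    _ = (A * X) * (A * Y) := by rw [hX3, hY3]
    _ = (A * X * A) * Y := by simp only [Matrix.mul_assoc]
    _ = A * Y := by rw [hX1]
  have hBA : X * A = Y * A := by
    calc X * A = (X * A)ᵀ := hX4.symm
    _ = (X * (A * Y * A))ᵀ := by rw [hY1]
    _ = (Y * A)ᵀ * (X * A)ᵀ := by simp only [transpose_mul, Matrix.mul_assoc]
    _ = (Y * A) * (X * A) := by rw [hX4, hY4]
    _ = Y * (A * X * A) := by simp only [Matrix.mul_assoc]
    _ = Y * A := by rw [hX1]
  calc X = X * A * X := hX2.symm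
  _ = Y * A * X := by rw [hBA]
  _ = Y * (A * X) := by rw [Matrix.mul_assoc]
  _ = Y * (A * Y) := by rw [hAB]
  _ = Y := by rw [← Matrix.mul_assoc, hY2]

lemma pinv_eq_of {m n : ℕ} {A : Matrix (Fin m) (Fin n) ℝ} {M : Matrix (Fin n) (Fin m) ℝ}
    (h : IsMPInv A M) : pinv A = M := by
  unfold pinv
  rw [dif_pos ⟨M, h⟩]
  exact mp_unique (Exists.choose_spec (⟨M, h⟩ : ∃ B, IsMPInv A B)) h

lemma isMPInv_of_inv {n : ℕ} {A M : Matrix (Fin n) (Fin n) ℝ} (h1 : A * M = 1) (h2 : M * A = 1) :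
    IsMPInv A M := by
  refine ⟨?_, ?_, ?_, ?_⟩ <;> simp [h1, h2]

lemma pinv_pos (p s c : ℝ) (hp : 0 < p) (hs : 0 < s) :
    pinv !![p + s*c^2, s*c; s*c, s] = (p*s)⁻¹ • !![s, -(s*c); -(s*c), p+s*c^2] := by
  have hps : p * s ≠ 0 := by positivity
  apply pinv_eq_of
  apply isMPInv_of_inv <;>
  · ext i j
    fin_cases i <;> fin_cases j <;>
      simp [Matrix.mul_apply, Fin.sum_univ_two, Matrix.one_apply, Matrix.vecHead, Matrix.vecTail, Matrix.transpose_apply] <;> field_simp <;> ring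

lemma pinv_zero (s c : ℝ) (hs : 0 < s) :
    pinv !![s*c^2, s*c; s*c, s] = (s*(c^2+1)^2)⁻¹ • !![c^2, c; c, 1] := by
  set N : Matrix (Fin 2) (Fin 2) ℝ := !![c^2, c; c, 1] with hN
  have hc2 : (c^2 + 1 : ℝ) ≠ 0 := by positivity
  have hs' : s ≠ 0 := ne_of_gt hs
  have hNN : N * N = (c^2+1) • N := by
    ext i j
    fin_cases i <;> fin_cases j <;>
      simp [hN, Matrix.mul_apply, Fin.sum_univ_two] <;> ring
  have hNT : Nᵀ = N := by
    ext i j; fin_cases i <;> fin_cases j <;> simp [hN]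
  have hA : !![s*c^2, s*c; s*c, s] = s • N := by
    ext i j; fin_cases i <;> fin_cases j <;> simp [hN]
  rw [hA]
  apply pinv_eq_of
  refine ⟨?_, ?_, ?_, ?_⟩ <;>
    simp only [Matrix.smul_mul, Matrix.mul_smul, hNN, smul_smul, Matrix.transpose_smul, hNT] <;>
    congr 1 <;> field_simp <;> ring_nf <;> tauto

lemma key1 (p s c : ℝ) (hp : 0 ≤ p) (hs : 0 < s) :
    s • (1 : Matrix (Fin 1) (Fin 1) ℝ) -
      s ^ 2 • (!![c, 1] * pinv !![p + s*c^2, s*c; s*c, s] * !![c, 1]ᵀ) = 0 := by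
  have hs' : s ≠ 0 := ne_of_gt hs
  rcases hp.lt_or_eq with hp | hp
  · rw [pinv_pos p s c hp hs]
    have hp' : p ≠ 0 := ne_of_gt hp
    ext i j
    fin_cases i; fin_cases j
    simp [Matrix.mul_apply, Fin.sum_univ_two, Matrix.one_apply, Matrix.vecHead, Matrix.vecTail, Matrix.transpose_apply, Matrix.vecMul, dotProduct]
    field_simp
    ring
  · have h0 : !![p + s*c^2, s*c; s*c, s] = !![s*c^2, s*c; s*c, s] := by
      rw [← hp]; norm_num
    rw [h0, pinv_zero s c hs]
    have hc2 : (c^2 + 1 : ℝ) ≠ 0 := by positivity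
    ext i j
    fin_cases i; fin_cases j
    simp [Matrix.mul_apply, Fin.sum_univ_two, Matrix.one_apply, Matrix.vecHead, Matrix.vecTail, Matrix.transpose_apply, Matrix.vecMul, dotProduct]
    field_simp
    ring

lemma key2 (p s c ρ : ℝ) (hp : 0 ≤ p) (hs : 0 < s) (hρ : p = 0 → ρ = 0) :
    !![c, 1] *ᵥ (pinv !![p + s*c^2, s*c; s*c, s] *ᵥ ![ρ, 0]) = 0 := by
  have hs' : s ≠ 0 := ne_of_gt hs
  rcases hp.lt_or_eq with hp | hp
  · rw [pinv_pos p s c hp hs]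
    have hp' : p ≠ 0 := ne_of_gt hp
    ext i
    fin_cases i
    simp [Matrix.mulVec, dotProduct, Fin.sum_univ_two]
    ring
  · rw [hρ hp.symm]
    have : (![(0:ℝ), 0] : Fin 2 → ℝ) = 0 := by ext i; fin_cases i <;> simp
    rw [this]
    simp

/-- for the scalar noncausal descriptor system `F z_{k+1} = C_k z_k + f_k`,
`F z_0 = q`, `a_k = H_k z_k + w_k` with `F = (1,0)`, `C_k = (c_k,1)`, `H_k = (h_k,0)`,
the minimax filter recursion for `P_k`, `r_k` (with scalar positive weights `S`, `S_k`, `R_k`)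
satisfies `P_k = R_k H_kᵀ H_k` and `r_k = R_k H_kᵀ a_k` for all `k ≥ 1`. -/
theorem scalar_noncausal_recursion
    (c h a : ℕ → ℝ) (S : ℝ) (Sw Rw : ℕ → ℝ)
    (hS : 0 < S) (hSw : ∀ k, 0 < Sw k) (hRw : ∀ k, 0 < Rw k)
    (F : Matrix (Fin 1) (Fin 2) ℝ) (hF : F = !![(1 : ℝ), 0])
    (C : ℕ → Matrix (Fin 1) (Fin 2) ℝ) (hC : ∀ k, C k = !![c k, 1])
    (H : ℕ → Matrix (Fin 1) (Fin 2) ℝ) (hH : ∀ k, H k = !![h k, 0])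
    (P : ℕ → Matrix (Fin 2) (Fin 2) ℝ) (B : ℕ → Matrix (Fin 2) (Fin 2) ℝ)
    (r : ℕ → Fin 2 → ℝ)
    (hB : ∀ k, B k = P k + (Sw k) • ((C k)ᵀ * C k))
    (hP0 : P 0 = S • (Fᵀ * F) + (Rw 0) • ((H 0)ᵀ * H 0))
    (hPrec : ∀ k, P (k + 1) =
      (Rw (k + 1)) • ((H (k + 1))ᵀ * H (k + 1)) +
        Fᵀ * ((Sw k) • (1 : Matrix (Fin 1) (Fin 1) ℝ) -
          (Sw k) ^ 2 • (C k * pinv (B k) * (C k)ᵀ)) * F)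
    (hr0 : r 0 = (Rw 0) • ((H 0)ᵀ *ᵥ ![a 0]))
    (hrrec : ∀ k, r (k + 1) =
      (Sw k) • (Fᵀ *ᵥ (C k *ᵥ (pinv (B k) *ᵥ r k))) +
        (Rw (k + 1)) • ((H (k + 1))ᵀ *ᵥ ![a (k + 1)])) :
    ∀ k, 1 ≤ k →
      P k = (Rw k) • ((H k)ᵀ * H k) ∧ r k = (Rw k) • ((H k)ᵀ *ᵥ ![a k]) := by
    -- generic matrix computations
  have hsq : ∀ (x y : ℝ), ((!![x, y] : Matrix (Fin 1) (Fin 2) ℝ)ᵀ * !![x, y]) =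
      !![x*x, x*y; y*x, y*y] := by
    intro x y
    ext i j
    fin_cases i <;> fin_cases j <;>
      simp [Matrix.mul_apply, Matrix.vecHead, Matrix.vecTail]
  have hvec : ∀ (x y t : ℝ), ((!![x, y] : Matrix (Fin 1) (Fin 2) ℝ)ᵀ *ᵥ ![t]) =
      ![x*t, y*t] := by
    intro x y t
    ext i
    fin_cases i <;>
      simp [Matrix.mulVec, dotProduct, Matrix.vecHead, Matrix.vecTail] <;> ring
  -- the invariant
  set I : ℕ → Prop := fun k => ∃ p ρ : ℝ, 0 ≤ p ∧ (p = 0 → ρ = 0) ∧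
      P k = !![p, 0; 0, 0] ∧ r k = ![ρ, 0] with hI
  -- base case
  have base : I 0 := by
    refine ⟨S + Rw 0 * (h 0)^2, Rw 0 * (h 0) * (a 0), ?_, ?_, ?_, ?_⟩
    · nlinarith [mul_nonneg (hRw 0).le (sq_nonneg (h 0))]
    · intro h0
      exfalso
      nlinarith [mul_nonneg (hRw 0).le (sq_nonneg (h 0))]
    · rw [hP0, hF, hH 0, hsq, hsq]
      ext i j
      fin_cases i <;> fin_cases j <;> simp <;> ring_nf <;> tauto
    · rw [hr0, hH 0, hvec]
      ext i
      fin_cases i <;> simp <;> ring_nf <;> tauto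
  -- inductive step: invariant implies goal at k+1
  have step : ∀ k, I k →
      (P (k+1) = (Rw (k+1)) • ((H (k+1))ᵀ * H (k+1)) ∧
       r (k+1) = (Rw (k+1)) • ((H (k+1))ᵀ *ᵥ ![a (k+1)])) := by
    intro k ⟨p, ρ, hp, hpρ, hPk, hrk⟩
    have hBk : B k = !![p + Sw k * (c k)^2, Sw k * (c k); Sw k * (c k), Sw k] := by
      rw [hB k, hPk, hC k, hsq]
      ext i j
      fin_cases i <;> fin_cases j <;> simp <;> ring_nf <;> tauto
    constructor
    · rw [hPrec k, hBk, hC k, key1 p (Sw k) (c k) hp (hSw k)]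
      simp
    · rw [hrrec k, hBk, hC k, hrk, key2 p (Sw k) (c k) ρ hp (hSw k) hpρ]
      simp
  -- goal at k+1 implies invariant at k+1
  have toI : ∀ k, (P (k+1) = (Rw (k+1)) • ((H (k+1))ᵀ * H (k+1)) ∧
       r (k+1) = (Rw (k+1)) • ((H (k+1))ᵀ *ᵥ ![a (k+1)])) → I (k+1) := by
    intro k ⟨h1, h2⟩
    refine ⟨Rw (k+1) * (h (k+1))^2, Rw (k+1) * (h (k+1)) * (a (k+1)), ?_, ?_, ?_, ?_⟩
    · exact mul_nonneg (hRw _).le (sq_nonneg _)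
    · intro h0
      have hR : Rw (k+1) ≠ 0 := ne_of_gt (hRw (k+1))
      have : h (k+1) = 0 := by
        have := mul_eq_zero.mp h0
        rcases this with h' | h'
        · exact absurd h' hR
        · exact pow_eq_zero_iff (by norm_num) |>.mp h'
      rw [this]; ring
    · rw [h1, hH (k+1), hsq]
      ext i j
      fin_cases i <;> fin_cases j <;> simp <;> ring_nf <;> tauto
    · rw [h2, hH (k+1), hvec]
      ext i
      fin_cases i <;> simp <;> ring_nf <;> tauto
  have hInv : ∀ k, I k := by
    intro k
    induction k with
    | zero => exact base
    | succ n ih => exact toI n (step n ih)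
  intro k hk
  obtain ⟨n, rfl⟩ := Nat.exists_eq_add_of_le hk
  rw [add_comm] at *
  exact step n (hInv n)
end

section
/- Let $L:\mathcal{H}\to\mathcal{F}$ be closed densely defined and $H\in\mathscr{L}(\mathcal{H},\mathcal{Y})$ satisfy the closedness conditions (1) $R(L)$ and $H(N(L))$ closed or (2) $\{[Lx,Hx]:x\in\mathscr{D}(L)\}$ closed. For any $\ell\in R(L^*)+R(H^*)$ and any $y\in\mathcal{Y}$, if $\hat u=H\hat p$ is the minimax estimator (with $(\hat z,\hat p)$ solving $L^*\hat z=\ell-H^*H\hat p$, $L\hat p=\hat z$) and $(\hat q,\hat\varphi)$ solves $L^*\hat q=H^*(y-H\hat\varphi)$, $L\hat\varphi=\hat q$, then $(\hat u, y)=(\ell,\hat\varphi)$. -/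
open LinearPMap

variable {H F Y : Type*}
  [NormedAddCommGroup H] [InnerProductSpace ℝ H] [CompleteSpace H]
  [NormedAddCommGroup F] [InnerProductSpace ℝ F] [CompleteSpace F]
  [NormedAddCommGroup Y] [InnerProductSpace ℝ Y] [CompleteSpace Y]

/-- under the closedness conditions, for `ℓ ∈ R(L*) + R(H*)` and any `y`, if
`û = Hp̂` with `(ẑ, p̂)` solving `L*ẑ = ℓ - H*Hp̂`, `Lp̂ = ẑ`, and `(q̂, φ̂)` solves
`L*q̂ = H*(y - Hφ̂)`, `Lφ̂ = q̂`, then `(û, y) = (ℓ, φ̂)`. -/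
theorem minimax_estimator_alt_representation (L : H →ₗ.[ℝ] F)
    (hLclosed : L.IsClosed) (hLdense : Dense (L.domain : Set H))
    (Hop : H →L[ℝ] Y)
    (hcond :
      (IsClosed (Set.range fun x : L.domain => L x) ∧
        IsClosed (Hop '' {x : H | ∃ hx : x ∈ L.domain, L ⟨x, hx⟩ = 0})) ∨
      IsClosed {p : F × Y | ∃ x : L.domain, p = (L x, Hop x)})
    (ℓ : H)
    (hℓ : ∃ (z : (L†).domain) (u : Y), ℓ = L† z + (ContinuousLinearMap.adjoint Hop) u)
    (y : Y)
    (zhat : (L†).domain) (phat : L.domain)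
    (hsys₁ : L† zhat = ℓ - (ContinuousLinearMap.adjoint Hop) (Hop phat))
    (hsys₂ : L phat = (zhat : F))
    (qhat : (L†).domain) (φhat : L.domain)
    (hsys₃ : L† qhat = (ContinuousLinearMap.adjoint Hop) (y - Hop φhat))
    (hsys₄ : L φhat = (qhat : F)) :
    (inner ℝ (Hop phat) y : ℝ) = (inner ℝ ℓ (φhat : H) : ℝ) := by

  have adj := LinearPMap.adjoint_isFormalAdjoint hLdense
  have hℓeq : ℓ = L† zhat + (ContinuousLinearMap.adjoint Hop) (Hop phat) := by
    rw [hsys₁]; abel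
  have h1 : (inner ℝ (L† zhat) (φhat : H) : ℝ) = inner ℝ (zhat : F) (qhat : F) := by
    rw [adj zhat φhat, hsys₄]
  have h2 : (inner ℝ (y - Hop φhat) (Hop phat) : ℝ) = inner ℝ (qhat : F) (zhat : F) := by
    rw [← ContinuousLinearMap.adjoint_inner_left, ← hsys₃, adj qhat phat, hsys₂]
  rw [hℓeq, inner_add_left, h1, ContinuousLinearMap.adjoint_inner_left,
    real_inner_comm (qhat : F) (zhat : F), ← h2, inner_sub_left,
    real_inner_comm ((Hop : H →L[ℝ] Y) phat) (Hop φhat)]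
  rw [real_inner_comm ((Hop : H →L[ℝ] Y) phat) y]; ring
end

section
/- Let $P\ge 0$ be a symmetric positive semidefinite $n\times n$ matrix, $C$ an $m\times n$ matrix, $S>0$ symmetric positive definite $m\times m$, and $B=P+C'SC$. Then $S - SCB^+C'S$ is symmetric positive semidefinite, where $B^+$ is the Moore–Penrose pseudoinverse of $B$. -/
open Matrix

lemma exists_mpinv_of_isHermitian {k : ℕ} {A : Matrix (Fin k) (Fin k) ℝ}
    (hA : A.IsHermitian) : ∃ B, IsMPInv A B := by
  set U : Matrix (Fin k) (Fin k) ℝ := (hA.eigenvectorUnitary : Matrix (Fin k) (Fin k) ℝ) with hU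
  set d : Fin k → ℝ := hA.eigenvalues with hd
  have hVU : star U * U = 1 := (Matrix.mem_unitaryGroup_iff').mp hA.eigenvectorUnitary.2
  have hspec : A = U * diagonal d * star U := by
    have := hA.spectral_theorem
    simpa using this
  have sand : ∀ e f : Fin k → ℝ,
      (U * diagonal e * star U) * (U * diagonal f * star U)
        = U * diagonal (fun i => e i * f i) * star U := by
    intro e f
    calc (U * diagonal e * star U) * (U * diagonal f * star U)
        = U * diagonal e * ((star U * U) * (diagonal f * star U)) := by
          simp only [Matrix.mul_assoc]
      _ = U * (diagonal e * diagonal f) * star U := by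
          rw [hVU, Matrix.one_mul]; simp only [Matrix.mul_assoc]
      _ = U * diagonal (fun i => e i * f i) * star U := by rw [diagonal_mul_diagonal]
  have hsU : star U = Uᵀ := by
    rw [Matrix.star_eq_conjTranspose, Matrix.conjTranspose_eq_transpose_of_trivial]
  have hsymm : ∀ e : Fin k → ℝ, (U * diagonal e * star U)ᵀ = U * diagonal e * star U := by
    intro e
    rw [hsU]
    simp [transpose_mul, diagonal_transpose, transpose_transpose, Matrix.mul_assoc]
  refine ⟨U * diagonal (fun i => (d i)⁻¹) * star U, ?_, ?_, ?_, ?_⟩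
  · rw [hspec, sand, sand]
    congr 2
    funext i
    by_cases h : d i = 0 <;> field_simp [h]
  · rw [hspec, sand, sand]
    congr 2
    funext i
    by_cases h : d i = 0 <;> field_simp [h]
  · rw [hspec, sand]; exact hsymm _
  · rw [hspec, sand]; exact hsymm _

lemma mpinv_unique {p q : ℕ} {A : Matrix (Fin p) (Fin q) ℝ} {G₁ G₂ : Matrix (Fin q) (Fin p) ℝ}
    (h₁ : IsMPInv A G₁) (h₂ : IsMPInv A G₂) : G₁ = G₂ := by
  obtain ⟨a1, b1, c1, d1⟩ := h₁
  obtain ⟨a2, b2, c2, d2⟩ := h₂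
  have hAG : A * G₁ = A * G₂ := by
    calc A * G₁ = (A * G₁)ᵀ := c1.symm
      _ = (A * G₂ * A * G₁)ᵀ := by rw [a2]
      _ = ((A * G₂) * (A * G₁))ᵀ := by simp only [Matrix.mul_assoc]
      _ = (A * G₁)ᵀ * (A * G₂)ᵀ := transpose_mul _ _
      _ = (A * G₁) * (A * G₂) := by rw [c1, c2]
      _ = A * G₁ * A * G₂ := by simp only [Matrix.mul_assoc]
      _ = A * G₂ := by rw [a1]
  have hGA : G₁ * A = G₂ * A := by
    calc G₁ * A = (G₁ * A)ᵀ := d1.symm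
      _ = (G₁ * (A * G₂ * A))ᵀ := by rw [a2]
      _ = ((G₁ * A) * (G₂ * A))ᵀ := by simp only [Matrix.mul_assoc]
      _ = (G₂ * A)ᵀ * (G₁ * A)ᵀ := transpose_mul _ _
      _ = (G₂ * A) * (G₁ * A) := by rw [d1, d2]
      _ = G₂ * (A * G₁ * A) := by simp only [Matrix.mul_assoc]
      _ = G₂ * A := by rw [a1]
  calc G₁ = G₁ * A * G₁ := b1.symm
    _ = G₂ * A * G₁ := by rw [hGA]
    _ = G₂ * (A * G₁) := Matrix.mul_assoc _ _ _
    _ = G₂ * (A * G₂) := by rw [hAG]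
    _ = G₂ * A * G₂ := (Matrix.mul_assoc _ _ _).symm
    _ = G₂ := b2

lemma isMPInv_pinv {k : ℕ} {A : Matrix (Fin k) (Fin k) ℝ} (hA : A.IsHermitian) :
    IsMPInv A (pinv A) := by
  have h : ∃ B, IsMPInv A B := exists_mpinv_of_isHermitian hA
  rw [pinv, dif_pos h]
  exact h.choose_spec

lemma pinv_symm {k : ℕ} {A : Matrix (Fin k) (Fin k) ℝ} (hA : A.IsHermitian) :
    (pinv A)ᵀ = pinv A := by
  obtain ⟨a, b, c, d⟩ := isMPInv_pinv hA
  have hAt : Aᵀ = A := by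
    rw [← Matrix.conjTranspose_eq_transpose_of_trivial]; exact hA
  have e1 : A * (pinv A)ᵀ = pinv A * A := by
    calc A * (pinv A)ᵀ = (pinv A * Aᵀ)ᵀ := by rw [transpose_mul, transpose_transpose]
      _ = (pinv A * A)ᵀ := by rw [hAt]
      _ = pinv A * A := d
  have e2 : (pinv A)ᵀ * A = A * pinv A := by
    calc (pinv A)ᵀ * A = (Aᵀ * pinv A)ᵀ := by rw [transpose_mul, transpose_transpose]
      _ = (A * pinv A)ᵀ := by rw [hAt]
      _ = A * pinv A := c
  have hGt : IsMPInv A (pinv A)ᵀ := by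
    refine ⟨?_, ?_, ?_, ?_⟩
    · calc A * (pinv A)ᵀ * A = (Aᵀ * pinv A * Aᵀ)ᵀ := by
            simp only [transpose_mul, transpose_transpose, Matrix.mul_assoc]
        _ = (A * pinv A * A)ᵀ := by rw [hAt]
        _ = A := by rw [a, hAt]
    · calc (pinv A)ᵀ * A * (pinv A)ᵀ = (pinv A * Aᵀ * pinv A)ᵀ := by
            simp only [transpose_mul, transpose_transpose, Matrix.mul_assoc]
        _ = (pinv A * A * pinv A)ᵀ := by rw [hAt]
        _ = (pinv A)ᵀ := by rw [b]
    · rw [e1, d]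
    · rw [e2, c]
  exact mpinv_unique hGt (isMPInv_pinv hA)

/-- If `P ≥ 0` (symmetric PSD, n×n), `S > 0` (symmetric PD, m×m), `C` is m×n and
`B = P + Cᵀ S C`, then `S - S C B⁺ Cᵀ S` is symmetric positive semidefinite. -/
theorem schur_type_psd {m n : ℕ} (P : Matrix (Fin n) (Fin n) ℝ) (hP : P.PosSemidef)
    (C : Matrix (Fin m) (Fin n) ℝ) (S : Matrix (Fin m) (Fin m) ℝ) (hS : S.PosDef) :
    (S - S * C * pinv (P + Cᵀ * S * C) * Cᵀ * S).PosSemidef := by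
  have hPt : Pᵀ = P := by
    rw [← Matrix.conjTranspose_eq_transpose_of_trivial]; exact hP.isHermitian
  have hSt : Sᵀ = S := by
    rw [← Matrix.conjTranspose_eq_transpose_of_trivial]; exact hS.isHermitian
  have hB : (P + Cᵀ * S * C).IsHermitian := by
    rw [Matrix.IsHermitian, Matrix.conjTranspose_eq_transpose_of_trivial]
    simp [transpose_mul, transpose_add, hPt, hSt, Matrix.mul_assoc]
  obtain ⟨G, hGeq, hGt, hGBG⟩ :
      ∃ G, pinv (P + Cᵀ * S * C) = G ∧ Gᵀ = G ∧ G * (P + Cᵀ * S * C) * G = G :=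
    ⟨_, rfl, pinv_symm hB, (isMPInv_pinv hB).2.1⟩
  rw [hGeq]
  have key : S - S * C * G * Cᵀ * S =
      (G * Cᵀ * S)ᵀ * P * (G * Cᵀ * S) +
      (C * G * Cᵀ * S - 1)ᵀ * S * (C * G * Cᵀ * S - 1) := by
    have expand : (G * Cᵀ * S)ᵀ * P * (G * Cᵀ * S) +
        (C * G * Cᵀ * S - 1)ᵀ * S * (C * G * Cᵀ * S - 1) - (S - S * C * G * Cᵀ * S)
        = S * C * (G * (P + Cᵀ * S * C) * G - G) * (Cᵀ * S) := by
      simp only [transpose_mul, transpose_sub, transpose_one, transpose_transpose, hSt, hGt,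
        Matrix.sub_mul, Matrix.mul_sub, Matrix.add_mul, Matrix.mul_add, Matrix.mul_one,
        Matrix.one_mul, Matrix.mul_assoc]
      abel
    have hz : S * C * (G * (P + Cᵀ * S * C) * G - G) * (Cᵀ * S) = 0 := by
      rw [hGBG, sub_self, Matrix.mul_zero, Matrix.zero_mul]
    rw [eq_comm, ← sub_eq_zero, expand, hz]
  rw [key]
  have h1 : ((G * Cᵀ * S)ᵀ * P * (G * Cᵀ * S)).PosSemidef := by
    have := hP.conjTranspose_mul_mul_same (G * Cᵀ * S)
    rwa [Matrix.conjTranspose_eq_transpose_of_trivial] at this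
  have h2 : ((C * G * Cᵀ * S - 1)ᵀ * S * (C * G * Cᵀ * S - 1)).PosSemidef := by
    have := hS.posSemidef.conjTranspose_mul_mul_same (C * G * Cᵀ * S - 1)
    rwa [Matrix.conjTranspose_eq_transpose_of_trivial] at this
  exact h1.add h2
end

section
/- Under the hypotheses of the a posteriori estimation theorem with $\mathcal{G}=\{(f,\eta):\|f\|^2+\|\eta\|^2\le 1\}$ and closedness condition (1) or (2), the minimax a posteriori error in direction $\ell$ satisfies $\hat d(\ell) = (1-(y, y-H\hat\varphi))^{1/2}\,\hat\sigma(\ell)$, where $\hat\varphi$ solves $L^*\hat q=H^*(y-H\hat\varphi)$, $L\hat\varphi=\hat q$, and $\hat\sigma(\ell)$ is the a priori minimax error for direction $\ell$. -/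
open LinearPMap

variable {H F Y : Type*}
  [NormedAddCommGroup H] [InnerProductSpace ℝ H] [CompleteSpace H]
  [NormedAddCommGroup F] [InnerProductSpace ℝ F] [CompleteSpace F]
  [NormedAddCommGroup Y] [InnerProductSpace ℝ Y] [CompleteSpace Y]

/-- The a posteriori set for the unit-ball bounding set:
`𝒳_y = {φ ∈ 𝒟(L) : ‖Lφ‖² + ‖y - Hφ‖² ≤ 1}`. -/
def aPostSetBall (L : H →ₗ.[ℝ] F) (Hop : H →L[ℝ] Y) (y : Y) : Set H :=
  {x : H | ∃ hx : x ∈ L.domain, ‖L ⟨x, hx⟩‖ ^ 2 + ‖y - Hop x‖ ^ 2 ≤ 1}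

/-- The minimax a posteriori error `d̂(ℓ) = inf_{φ ∈ 𝒳_y} sup_{ψ ∈ 𝒳_y} |(ℓ, φ - ψ)|`. -/
noncomputable def aPostErr (X : Set H) (ℓ : H) : EReal :=
  ⨅ φ ∈ X, ⨆ ψ ∈ X, ((|(inner ℝ ℓ φ : ℝ) - (inner ℝ ℓ ψ : ℝ)| : ℝ) : EReal)

/-- with `𝒢 = {(f,η) : ‖f‖² + ‖η‖² ≤ 1}` and the closedness conditions, the
minimax a posteriori error satisfies `d̂(ℓ) = (1 - (y, y - Hφ̂))^{1/2} σ̂(ℓ)`, where `φ̂` solves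
`L*q̂ = H*(y - Hφ̂)`, `Lφ̂ = q̂`, and `σ̂(ℓ) = (ℓ, p̂)^{1/2}` is the a priori minimax error, with
`(ẑ, p̂)` solving `L*ẑ = ℓ - H*Hp̂`, `Lp̂ = ẑ`. -/
theorem a_posteriori_error_formula (L : H →ₗ.[ℝ] F)
    (hLclosed : L.IsClosed) (hLdense : Dense (L.domain : Set H))
    (Hop : H →L[ℝ] Y) (y : Y)
    (hcond :
      (IsClosed (Set.range fun x : L.domain => L x) ∧
        IsClosed (Hop '' {x : H | ∃ hx : x ∈ L.domain, L ⟨x, hx⟩ = 0})) ∨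
      IsClosed {p : F × Y | ∃ x : L.domain, p = (L x, Hop x)})
    (hXne : (aPostSetBall L Hop y).Nonempty)
    (ℓ : H)
    (hℓ : ∃ (z : (L†).domain) (u : Y), ℓ = L† z + (ContinuousLinearMap.adjoint Hop) u)
    (zhat : (L†).domain) (phat : L.domain)
    (hsys₁ : L† zhat = ℓ - (ContinuousLinearMap.adjoint Hop) (Hop phat))
    (hsys₂ : L phat = (zhat : F))
    (qhat : (L†).domain) (φhat : L.domain)
    (hsys₃ : L† qhat = (ContinuousLinearMap.adjoint Hop) (y - Hop φhat))
    (hsys₄ : L φhat = (qhat : F)) :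
    aPostErr (aPostSetBall L Hop y) ℓ =
      ((Real.sqrt (1 - (inner ℝ y (y - Hop φhat) : ℝ)) *
          Real.sqrt ((inner ℝ ℓ (phat : H) : ℝ)) : ℝ) : EReal) := by
  classical
  have hadj := LinearPMap.adjoint_isFormalAdjoint hLdense
  set X := aPostSetBall L Hop y with hXdef
  set e : Y := y - Hop (φhat : H) with he
  set s2 : ℝ := (inner ℝ ℓ (phat : H) : ℝ) with hs2def
  set r2 : ℝ := 1 - (inner ℝ y e : ℝ) with hr2def
  set c : ℝ := Real.sqrt r2 * Real.sqrt s2 with hcdef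
  -- Euler equation for φhat
  have heuler : ∀ v : L.domain, (inner ℝ (L φhat) (L v) : ℝ) = inner ℝ e (Hop (v : H)) := by
    intro v
    have h1 := hadj qhat v
    rw [hsys₃, ContinuousLinearMap.adjoint_inner_left] at h1
    rw [hsys₄]
    exact h1.symm
  -- representation of ℓ
  have hkey : ∀ v : L.domain,
      (inner ℝ ℓ (v : H) : ℝ) = inner ℝ (L phat) (L v) + inner ℝ (Hop (phat : H)) (Hop (v : H)) := by
    intro v
    have h1 := hadj zhat v
    rw [hsys₁] at h1
    rw [inner_sub_left, ContinuousLinearMap.adjoint_inner_left] at h1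
    rw [← hsys₂] at h1
    linarith [h1]
  -- s2 as a sum of squares
  have hs2 : s2 = ‖L phat‖ ^ 2 + ‖Hop (phat : H)‖ ^ 2 := by
    rw [hs2def, hkey phat, ← real_inner_self_eq_norm_sq, ← real_inner_self_eq_norm_sq]
  have hs2nn : 0 ≤ s2 := by rw [hs2]; positivity
  -- the value of the quadratic functional at φhat
  have hJ : (inner ℝ y e : ℝ) = ‖L φhat‖ ^ 2 + ‖e‖ ^ 2 := by
    have h1 : (inner ℝ e (Hop (φhat : H)) : ℝ) = ‖L φhat‖ ^ 2 := by
      rw [← heuler φhat, real_inner_self_eq_norm_sq]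
    have h2 : y = e + Hop (φhat : H) := by rw [he]; abel
    calc (inner ℝ y e : ℝ) = inner ℝ (e + Hop (φhat : H)) e := by rw [← h2]
      _ = inner ℝ e e + inner ℝ (Hop (φhat : H)) e := by rw [inner_add_left]
      _ = ‖e‖ ^ 2 + inner ℝ e (Hop (φhat : H)) := by
          rw [real_inner_self_eq_norm_sq, real_inner_comm]
      _ = ‖L φhat‖ ^ 2 + ‖e‖ ^ 2 := by rw [h1]; ring
  -- decomposition of the functional
  have hdec : ∀ v : L.domain,
      ‖L (φhat + v)‖ ^ 2 + ‖y - Hop ((φhat + v : L.domain) : H)‖ ^ 2 =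
        (‖L φhat‖ ^ 2 + ‖e‖ ^ 2) + (‖L v‖ ^ 2 + ‖Hop (v : H)‖ ^ 2) := by
    intro v
    have hadd : L (φhat + v) = L φhat + L v := LinearPMap.map_add L φhat v
    have hsub : y - Hop ((φhat + v : L.domain) : H) = e - Hop (v : H) := by
      have : ((φhat + v : L.domain) : H) = (φhat : H) + (v : H) := rfl
      rw [this, _root_.map_add, he]; abel
    rw [hadd, hsub, norm_add_sq_real, norm_sub_sq_real, heuler v]
    ring
  -- membership criterion
  have hmem : ∀ v : L.domain, (‖L v‖ ^ 2 + ‖Hop (v : H)‖ ^ 2) ≤ r2 →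
      ((φhat + v : L.domain) : H) ∈ X := by
    intro v hv
    refine ⟨(φhat + v).2, ?_⟩
    have := hdec v
    have h2 : (⟨((φhat + v : L.domain) : H), (φhat + v).2⟩ : L.domain) = φhat + v := rfl
    rw [h2, this]
    rw [hr2def] at hv
    rw [hJ] at hv
    linarith
  -- decomposition of members of X
  have hsub : ∀ ψ ∈ X, ∃ v : L.domain,
      ψ = (φhat : H) + (v : H) ∧ ‖L v‖ ^ 2 + ‖Hop (v : H)‖ ^ 2 ≤ r2 := by
    rintro ψ ⟨hψ, hle⟩
    refine ⟨⟨ψ, hψ⟩ - φhat, by simp, ?_⟩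
    have h1 := hdec (⟨ψ, hψ⟩ - φhat)
    rw [add_sub_cancel] at h1
    rw [h1] at hle
    rw [hr2def, hJ]
    linarith
  -- r2 ≥ 0
  have hr2nn : 0 ≤ r2 := by
    obtain ⟨ψ, hψ⟩ := hXne
    obtain ⟨v, _, hQ⟩ := hsub ψ hψ
    have : (0:ℝ) ≤ ‖L v‖ ^ 2 + ‖Hop (v : H)‖ ^ 2 := by positivity
    linarith
  -- φhat ∈ X
  have hφX : (φhat : H) ∈ X := by
    have := hmem 0 (by simpa using hr2nn)
    simpa using this
  have hcnn : 0 ≤ c := mul_nonneg (Real.sqrt_nonneg _) (Real.sqrt_nonneg _)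
  -- Cauchy-Schwarz bound
  have hCS : ∀ v : L.domain, ‖L v‖ ^ 2 + ‖Hop (v : H)‖ ^ 2 ≤ r2 →
      |(inner ℝ ℓ (v : H) : ℝ)| ≤ c := by
    intro v hQ
    set Q : ℝ := ‖L v‖ ^ 2 + ‖Hop (v : H)‖ ^ 2 with hQdef
    have hQnn : 0 ≤ Q := by rw [hQdef]; positivity
    have hsq : (inner ℝ ℓ (v : H) : ℝ) ^ 2 ≤ s2 * Q := by
      rw [hkey v, hs2, hQdef]
      have c1 := abs_real_inner_le_norm (L phat) (L v)
      have c2 := abs_real_inner_le_norm (Hop (phat : H)) (Hop (v : H))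
      have h3 : |(inner ℝ (L phat) (L v) : ℝ) + inner ℝ (Hop (phat : H)) (Hop (v : H))| ≤
          ‖L phat‖ * ‖L v‖ + ‖Hop (phat : H)‖ * ‖Hop (v : H)‖ :=
        (abs_add_le _ _).trans (add_le_add c1 c2)
      have h4 : ((inner ℝ (L phat) (L v) : ℝ) + inner ℝ (Hop (phat : H)) (Hop (v : H))) ^ 2 ≤
          (‖L phat‖ * ‖L v‖ + ‖Hop (phat : H)‖ * ‖Hop (v : H)‖) ^ 2 := by
        rw [← sq_abs]
        exact pow_le_pow_left₀ (abs_nonneg _) h3 2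
      nlinarith [sq_nonneg (‖L phat‖ * ‖Hop (v : H)‖ - ‖Hop (phat : H)‖ * ‖L v‖)]
    calc |(inner ℝ ℓ (v : H) : ℝ)| = Real.sqrt ((inner ℝ ℓ (v : H) : ℝ) ^ 2) :=
          (Real.sqrt_sq_eq_abs _).symm
      _ ≤ Real.sqrt (s2 * r2) := by
          apply Real.sqrt_le_sqrt
          calc (inner ℝ ℓ (v : H) : ℝ) ^ 2 ≤ s2 * Q := hsq
            _ ≤ s2 * r2 := mul_le_mul_of_nonneg_left hQ hs2nn
      _ = c := by rw [hcdef, Real.sqrt_mul hs2nn, mul_comm]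
  -- witnesses
  have hWitMem : ∀ s : ℝ, s ^ 2 * s2 = r2 → ((φhat + s • phat : L.domain) : H) ∈ X := by
    intro s hs
    apply hmem
    have e1 : ‖L (s • phat)‖ ^ 2 = s ^ 2 * ‖L phat‖ ^ 2 := by
      rw [L.map_smul, norm_smul, Real.norm_eq_abs, mul_pow, sq_abs]
    have e2 : ‖Hop ((s • phat : L.domain) : H)‖ ^ 2 = s ^ 2 * ‖Hop (phat : H)‖ ^ 2 := by
      have : ((s • phat : L.domain) : H) = s • (phat : H) := rfl
      rw [this, _root_.map_smul, norm_smul, Real.norm_eq_abs, mul_pow, sq_abs]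
    rw [e1, e2]
    rw [hs2] at hs
    nlinarith [hs]
  have hWitVal : ∀ s : ℝ,
      (inner ℝ ℓ ((φhat + s • phat : L.domain) : H) : ℝ) = inner ℝ ℓ (φhat : H) + s * s2 := by
    intro s
    have h1 : ((φhat + s • phat : L.domain) : H) = (φhat : H) + s • (phat : H) := rfl
    rw [h1, inner_add_right, real_inner_smul_right, hs2def]
  -- now the EReal computation
  rw [aPostErr]
  apply le_antisymm
  · refine iInf₂_le_of_le (φhat : H) hφX (iSup₂_le ?_)
    intro ψ hψ
    obtain ⟨v, rfl, hQ⟩ := hsub ψ hψ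
    have h1 : (inner ℝ ℓ ((φhat : H)) : ℝ) - inner ℝ ℓ ((φhat : H) + (v : H)) =
        -(inner ℝ ℓ (v : H) : ℝ) := by rw [inner_add_right]; ring
    rw [EReal.coe_le_coe_iff, h1, abs_neg]
    exact hCS v hQ
  · refine le_iInf₂ ?_
    intro φ hφ
    rcases eq_or_lt_of_le hcnn with hc0 | hcpos
    · refine le_iSup₂_of_le φ hφ ?_
      rw [← hc0]
      simp
    · have hs2pos : 0 < s2 := by
        rcases lt_or_ge 0 s2 with h | h
        · exact h
        · exfalso
          have : Real.sqrt s2 = 0 := Real.sqrt_eq_zero'.mpr h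
          rw [hcdef, this, mul_zero] at hcpos
          exact lt_irrefl _ hcpos
      have hr2pos : 0 < r2 := by
        rcases lt_or_ge 0 r2 with h | h
        · exact h
        · exfalso
          have : Real.sqrt r2 = 0 := Real.sqrt_eq_zero'.mpr h
          rw [hcdef, this, zero_mul] at hcpos
          exact lt_irrefl _ hcpos
      set t : ℝ := Real.sqrt r2 / Real.sqrt s2 with htdef
      have hsqs2 : Real.sqrt s2 * Real.sqrt s2 = s2 := Real.mul_self_sqrt hs2nn
      have hsqr2 : Real.sqrt r2 * Real.sqrt r2 = r2 := Real.mul_self_sqrt hr2nn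
      have hs2sqrtpos : 0 < Real.sqrt s2 := Real.sqrt_pos.mpr hs2pos
      have ht2 : t ^ 2 * s2 = r2 := by
        rw [htdef, div_pow, Real.sq_sqrt hr2nn, Real.sq_sqrt hs2nn]
        field_simp
      have htneg2 : (-t) ^ 2 * s2 = r2 := by rw [show (-t) ^ 2 = t ^ 2 by ring]; exact ht2
      have hts : t * s2 = c := by
        rw [htdef, hcdef]
        field_simp
        rw [Real.sq_sqrt hs2nn]
      have hmemP := hWitMem t ht2
      have hmemM := hWitMem (-t) htneg2
      have hvalP := hWitVal t
      have hvalM := hWitVal (-t)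
      set xP : ℝ := inner ℝ ℓ ((φhat + t • phat : L.domain) : H) with hxP
      set xM : ℝ := inner ℝ ℓ ((φhat + (-t) • phat : L.domain) : H) with hxM
      set a : ℝ := inner ℝ ℓ φ with ha
      have hdiff : xP - xM = 2 * c := by
        have h1 : xP = inner ℝ ℓ (φhat : H) + t * s2 := hvalP
        have h2 : xM = inner ℝ ℓ (φhat : H) + (-t) * s2 := hvalM
        rw [h1, h2]
        linarith [hts]
      have hcase : c ≤ |a - xP| ∨ c ≤ |a - xM| := by
        by_contra hcon
        push_neg at hcon
        obtain ⟨h1, h2⟩ := hcon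
        have h3 : |xP - xM| ≤ |a - xP| + |a - xM| := by
          calc |xP - xM| = |(a - xM) - (a - xP)| := by
                rw [show xP - xM = (a - xM) - (a - xP) by ring]
            _ ≤ |a - xM| + |a - xP| := abs_sub _ _
            _ = |a - xP| + |a - xM| := by ring
        rw [hdiff, abs_of_nonneg (by linarith : (0:ℝ) ≤ 2 * c)] at h3
        linarith
      rcases hcase with hcl | hcl
      · exact le_iSup₂_of_le _ hmemP (EReal.coe_le_coe_iff.mpr hcl)
      · exact le_iSup₂_of_le _ hmemM (EReal.coe_le_coe_iff.mpr hcl)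
end
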